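/- arXiv:1503.06286 — 5 statements merged into one kernel-verified Lean document; each statement's English description precedes it below -/
import Mathlib

section
/- Let k ≥ 1 be an integer and let G be a connected k-regular finite simple graph whose second largest adjacency eigenvalue satisfies λ₂(G) ≤ 0. Then G has at most 2k vertices, with equality if and only if G is isomorphic to the complete bipartite graph K_{k,k}. -/
open Polynomial

/-- The adjacency matrix of a simple graph over `ℝ` is Hermitian. -/
theorem adjMatrix_isHermitian {V : Type*} [Fintype V] [DecidableEq V]
    (G : SimpleGraph V) [DecidableRel G.Adj] : (G.adjMatrix ℝ).IsHermitian := by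
  rw [Matrix.IsHermitian, Matrix.conjTranspose_eq_transpose_of_trivial]
  exact G.isSymm_adjMatrix

/-- The multiset of adjacency eigenvalues (with multiplicity) of a finite simple graph. -/
noncomputable def eigMultiset {V : Type*} [Fintype V] [DecidableEq V]
    (G : SimpleGraph V) [DecidableRel G.Adj] : Multiset ℝ :=
  Multiset.map (adjMatrix_isHermitian G).eigenvalues Finset.univ.val

/-- The second largest adjacency eigenvalue (with multiplicity) of a finite simple graph:
the second-to-last entry of the nondecreasing sorted list of eigenvalues. -/
noncomputable def secondEigenvalue {V : Type*} [Fintype V] [DecidableEq V]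
    (G : SimpleGraph V) [DecidableRel G.Adj] : ℝ :=
  ((eigMultiset G).sort (· ≤ ·)).getD (((eigMultiset G).sort (· ≤ ·)).length - 2) 0

/-- The largest adjacency eigenvalue (spectral radius) of a finite simple graph. -/
noncomputable def largestEigenvalue {V : Type*} [Fintype V] [DecidableEq V]
    (G : SimpleGraph V) [DecidableRel G.Adj] : ℝ :=
  ((eigMultiset G).sort (· ≤ ·)).getD (((eigMultiset G).sort (· ≤ ·)).length - 1) 0

/-- The orthogonal polynomials `F_i^{(k)}`. -/
noncomputable def Fpoly (k : ℕ) : ℕ → Polynomial ℝ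
  | 0 => 1
  | 1 => X
  | 2 => X ^ 2 - C (k : ℝ)
  | n + 3 => X * Fpoly k (n + 2) - C ((k : ℝ) - 1) * Fpoly k (n + 1)

/-- `G_i = Σ_{j=0}^i F_j`. -/
noncomputable def Gpoly (k : ℕ) (i : ℕ) : Polynomial ℝ :=
  ∑ j ∈ Finset.range (i + 1), Fpoly k j

/-- The tridiagonal matrix `T(k,t,c)`: superdiagonal `(k, k-1, …, k-1)`,
subdiagonal `(1, …, 1, c)`, diagonal chosen so that every row sums to `k`. -/
noncomputable def Tmat (k t : ℕ) (c : ℝ) : Matrix (Fin t) (Fin t) ℝ :=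
  Matrix.of fun i j =>
    if (j : ℕ) = (i : ℕ) + 1 then (if (i : ℕ) = 0 then (k : ℝ) else (k : ℝ) - 1)
    else if (i : ℕ) = (j : ℕ) + 1 then (if (i : ℕ) = t - 1 then c else 1)
    else if i = j then
      (k : ℝ) - (if (i : ℕ) + 1 < t then (if (i : ℕ) = 0 then (k : ℝ) else (k : ℝ) - 1) else 0)
        - (if 0 < (i : ℕ) then (if (i : ℕ) = t - 1 then c else 1) else 0)
    else 0

/-- `M(k,t,c) = 1 + Σ_{i=0}^{t-3} k (k-1)^i + k (k-1)^{t-2} / c`. -/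
noncomputable def Mbound (k t : ℕ) (c : ℝ) : ℝ :=
  1 + (∑ i ∈ Finset.range (t - 2), (k : ℝ) * ((k : ℝ) - 1) ^ i)
    + (k : ℝ) * ((k : ℝ) - 1) ^ (t - 2) / c

/-!
The all-ones vector is an eigenvector for `k`, and `λ₂ ≤ 0` leaves every other eigenvalue `λ`
nonpositive; as the eigenvalues sum to `tr A = 0`, also `λ ≥ -k`. So `λ (λ + k) ≤ 0` for all
eigenvalues but `k`, and summing `λ (λ + k)` over the spectrum gives `n k = tr A² ≤ 2 k²`.
In the equality case the other eigenvalues lie in `{0, -k}`, hence `tr A³ = k² tr A = 0` and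
the graph is triangle-free. In a triangle-free `k`-regular graph on `2k` vertices adjacent
vertices have complementary neighbourhoods, which forces `K_{k,k}`.
-/

theorem List.Pairwise.countP_lt_le_one {α : Type*} [LinearOrder α] {l : List α}
    (hl : l.Pairwise (· ≤ ·)) {a d : α} (h : l.getD (l.length - 2) d ≤ a) :
    l.countP (a < ·) ≤ 1 := by
  rcases l.eq_nil_or_concat' with rfl | ⟨t, x, rfl⟩
  · simp
  suffices ∀ y ∈ t, y ≤ a by
    have ht : t.countP (a < ·) = 0 := List.countP_eq_zero.mpr fun y hy => by simpa using this y hy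
    simpa [List.countP_append, ht] using List.countP_le_length (l := [x]) (p := (a < ·))
  intro y hy
  have ht : t ≠ [] := List.ne_nil_of_mem hy
  have hlast : (t ++ [x]).getD ((t ++ [x]).length - 2) d = t.getLast ht := by
    simp [List.getLast_eq_getElem, List.length_pos_iff.mpr ht]
  exact ((List.pairwise_append.mp hl).1.rel_getLast hy).trans (hlast ▸ h)

section SumSq
open Finset
variable {ι : Type*} [Fintype ι] [DecidableEq ι] {x : ι → ℝ} {i₀ : ι}

lemma neg_le_of_sum_eq_zero (hx : ∀ i ≠ i₀, x i ≤ 0) (hsum : ∑ i, x i = 0) {i : ι}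
    (hi : i ≠ i₀) : -x i₀ ≤ x i := by
  have : ∑ j, x j ≤ ∑ j ∈ {i, i₀}, x j :=
    sum_le_sum_of_subset_of_nonpos' (subset_univ _) fun j _ hj => hx j (by simp_all)
  rw [hsum, sum_pair hi] at this
  linarith

lemma sum_sq_eq_of_sum_eq_zero (hsum : ∑ i, x i = 0) :
    ∑ i, x i ^ 2 = 2 * x i₀ ^ 2 + ∑ i ∈ univ.erase i₀, x i * (x i + x i₀) := by
  have : ∑ i, x i ^ 2 = ∑ i, x i * (x i + x i₀) := by
    simp only [mul_add, sum_add_distrib, ← sum_mul, hsum, zero_mul, add_zero, sq]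
  rw [this, ← add_sum_erase _ _ (mem_univ i₀)]
  ring

lemma sum_sq_le_of_sum_eq_zero (hx : ∀ i ≠ i₀, x i ≤ 0) (hsum : ∑ i, x i = 0) :
    ∑ i, x i ^ 2 ≤ 2 * x i₀ ^ 2 := by
  rw [sum_sq_eq_of_sum_eq_zero hsum, add_le_iff_nonpos_right]
  refine sum_nonpos fun i hi => mul_nonpos_of_nonpos_of_nonneg (hx i (ne_of_mem_erase hi)) ?_
  linarith [neg_le_of_sum_eq_zero hx hsum (ne_of_mem_erase hi)]

lemma sum_pow_three_eq_zero_of_sum_sq_eq (hx : ∀ i ≠ i₀, x i ≤ 0) (hsum : ∑ i, x i = 0)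
    (hsq : ∑ i, x i ^ 2 = 2 * x i₀ ^ 2) : ∑ i, x i ^ 3 = 0 := by
  have hterms : ∀ i ∈ univ.erase i₀, x i * (x i + x i₀) = 0 := by
    rw [sum_sq_eq_of_sum_eq_zero hsum, add_eq_left] at hsq
    refine (sum_eq_zero_iff_of_nonpos fun i hi => ?_).mp hsq
    exact mul_nonpos_of_nonpos_of_nonneg (hx i (ne_of_mem_erase hi))
      (by linarith [neg_le_of_sum_eq_zero hx hsum (ne_of_mem_erase hi)])
  have hcube : ∀ i, x i ^ 3 = x i₀ ^ 2 * x i := by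
    intro i
    by_cases hi : i = i₀
    · rw [hi]; ring
    · linear_combination (x i - x i₀) * hterms i (mem_erase.mpr ⟨hi, mem_univ i⟩)
  simp only [hcube, ← mul_sum, hsum, mul_zero]
end SumSq

namespace Matrix.IsHermitian

variable {𝕜 n : Type*} [RCLike 𝕜] [Fintype n] [DecidableEq n] {A : Matrix n n 𝕜}

lemma trace_pow (hA : A.IsHermitian) (m : ℕ) :
    (A ^ m).trace = ∑ i, (hA.eigenvalues i : 𝕜) ^ m := by
  rw [← cfc_pow_id (R := ℝ) A m hA.isSelfAdjoint, hA.cfc_eq, IsHermitian.cfc,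
    Unitary.conjStarAlgAut_apply, trace_mul_cycle, Unitary.coe_star_mul_self, one_mul, trace_diagonal]
  simp

lemma exists_eigenvalues_eq_of_mulVec_eq_smul {B : Matrix n n ℝ} (hB : B.IsHermitian) {c : ℝ}
    {v : n → ℝ} (hv : v ≠ 0) (h : B *ᵥ v = c • v) : ∃ i, hB.eigenvalues i = c := by
  have : Module.End.HasEigenvector (toLin' B) c v :=
    ⟨Module.End.mem_eigenspace_iff.mpr (by rwa [toLin'_apply]), hv⟩
  have hc := (Module.End.hasEigenvalue_of_hasEigenvector this).mem_spectrum
  rwa [spectrum_toLin', hB.spectrum_real_eq_range_eigenvalues] at hc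

end Matrix.IsHermitian

namespace SimpleGraph

open Finset

variable {V : Type*} [Fintype V] [DecidableEq V] {G : SimpleGraph V} [DecidableRel G.Adj] {k : ℕ}

lemma cliqueFree_three_of_trace_adjMatrix_pow_three (h : ((G.adjMatrix ℝ) ^ 3).trace = 0) :
    G.CliqueFree 3 := by
  intro s hs
  obtain ⟨a, b, c, hab, hac, hbc, -⟩ := is3Clique_iff.mp hs
  have hwalks := (sum_eq_zero_iff_of_nonneg fun u _ => by
    rw [Matrix.diag_apply, adjMatrix_pow_apply_eq_card_walk]; positivity).mp h a (mem_univ a)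
  rw [Matrix.diag_apply, adjMatrix_pow_apply_eq_card_walk, Nat.cast_eq_zero,
    Fintype.card_eq_zero_iff] at hwalks
  exact hwalks.false ⟨.cons hab (.cons hbc (.cons hac.symm .nil)), rfl⟩

lemma IsRegularOfDegree.trace_adjMatrix_sq (hreg : G.IsRegularOfDegree k) :
    ((G.adjMatrix ℝ) ^ 2).trace = Fintype.card V * k := by
  simp only [Matrix.trace, Matrix.diag_apply, sq, adjMatrix_mul_self_apply_self, hreg.degree_eq,
    sum_const, card_univ, nsmul_eq_mul]

lemma IsRegularOfDegree.neighborFinset_eq_compl (hreg : G.IsRegularOfDegree k)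
    (htf : G.CliqueFree 3) (hcard : Fintype.card V = 2 * k) {u v : V} (huv : G.Adj u v) :
    G.neighborFinset v = (G.neighborFinset u)ᶜ := by
  refine eq_of_subset_of_card_le (subset_compl_iff_disjoint_left.mpr ?_) ?_
  · refine Finset.disjoint_left.mpr fun w hwu hwv => htf {u, v, w} (is3Clique_triple_iff.mpr ?_)
    simp_all
  · simp only [card_compl, hcard, card_neighborFinset_eq_degree, hreg.degree_eq]
    omega

lemma adj_iff_of_neighborFinset_eq_compl
    (h : ∀ u v, G.Adj u v → G.neighborFinset v = (G.neighborFinset u)ᶜ) (w : V) {u v : V} :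
    G.Adj u v ↔ (G.Adj w u ↔ ¬ G.Adj w v) := by
  have hcompl {x y : V} (hxy : G.Adj x y) (z : V) : G.Adj y z ↔ ¬ G.Adj x z := by
    rw [← mem_neighborFinset, h x y hxy, mem_compl, mem_neighborFinset]
  constructor
  · intro huv
    have := hcompl huv w
    rw [G.adj_comm v, G.adj_comm u] at this
    tauto
  · intro hiff
    by_cases hwu : G.Adj w u
    · exact (hcompl hwu v).mpr (hiff.mp hwu)
    · exact ((hcompl (not_not.mp (mt hiff.mpr hwu)) u).mpr hwu).symm

def isoCompleteBipartiteGraphOfAdjIff (p : V → Prop) [DecidablePred p]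
    (h : ∀ u v, G.Adj u v ↔ (p u ↔ ¬ p v)) :
    G ≃g completeBipartiteGraph {v // p v} {v // ¬ p v} where
  toEquiv := (Equiv.sumCompl p).symm
  map_rel_iff' {u v} := by
    by_cases hu : p u <;> by_cases hv : p v <;>
      simp [Equiv.sumCompl_symm_apply_of_pos, Equiv.sumCompl_symm_apply_of_neg, hu, hv, h u v,
        completeBipartiteGraph]

lemma IsRegularOfDegree.nonempty_iso_completeBipartiteGraph [Nonempty V]
    (hreg : G.IsRegularOfDegree k) (htf : G.CliqueFree 3) (hcard : Fintype.card V = 2 * k) :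
    Nonempty (G ≃g completeBipartiteGraph (Fin k) (Fin k)) := by
  obtain ⟨w⟩ := ‹Nonempty V›
  have hleft : Fintype.card {v // G.Adj w v} = k := by
    rw [Fintype.card_subtype, ← hreg.degree_eq w, ← card_neighborFinset_eq_degree]
    congr 1; ext; simp
  have hright : Fintype.card {v // ¬ G.Adj w v} = k := by
    rw [Fintype.card_subtype_compl, hleft, hcard]; omega
  exact ⟨(isoCompleteBipartiteGraphOfAdjIff (G.Adj w) fun u v =>
    adj_iff_of_neighborFinset_eq_compl (fun _ _ => hreg.neighborFinset_eq_compl htf hcard) w).trans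
      (completeBipartiteGraphCongr (Fintype.equivFinOfCardEq hleft)
        (Fintype.equivFinOfCardEq hright))⟩

lemma eigenvalues_nonpos_of_secondEigenvalue_nonpos (h : secondEigenvalue G ≤ 0) {i j : V}
    (hij : i ≠ j) (hi : 0 < (adjMatrix_isHermitian G).eigenvalues i) :
    (adjMatrix_isHermitian G).eigenvalues j ≤ 0 := by
  have hcount := (eigMultiset G).pairwise_sort (· ≤ ·) |>.countP_lt_le_one h
  rw [← Multiset.coe_countP, Multiset.sort_eq, eigMultiset, Multiset.countP_map] at hcount
  by_contra! hj
  exact hij ((card_le_one (s := {x | 0 < (adjMatrix_isHermitian G).eigenvalues x})).mp hcount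
    i (by simpa using hi) j (by simpa using hj))

lemma sum_eigenvalues_adjMatrix (G : SimpleGraph V) [DecidableRel G.Adj] :
    ∑ i, (adjMatrix_isHermitian G).eigenvalues i = 0 := by
  simpa [trace_adjMatrix] using ((adjMatrix_isHermitian G).trace_pow 1).symm

lemma IsRegularOfDegree.sum_eigenvalues_sq (hreg : G.IsRegularOfDegree k) :
    ∑ i, (adjMatrix_isHermitian G).eigenvalues i ^ 2 = Fintype.card V * k := by
  simpa [hreg.trace_adjMatrix_sq] using ((adjMatrix_isHermitian G).trace_pow 2).symm

lemma cliqueFree_three_of_sum_eigenvalues_pow_three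
    (h : ∑ i, (adjMatrix_isHermitian G).eigenvalues i ^ 3 = 0) : G.CliqueFree 3 :=
  cliqueFree_three_of_trace_adjMatrix_pow_three (by rw [(adjMatrix_isHermitian G).trace_pow]; simpa)

lemma IsRegularOfDegree.exists_eigenvalues_eq [Nonempty V] (hreg : G.IsRegularOfDegree k) :
    ∃ i, (adjMatrix_isHermitian G).eigenvalues i = k := by
  refine (adjMatrix_isHermitian G).exists_eigenvalues_eq_of_mulVec_eq_smul
    (v := Function.const V 1) (by simp) (funext fun v => ?_)
  simp [hreg.degree_eq]

lemma IsRegularOfDegree.exists_eigenvalues_eq_of_secondEigenvalue_nonpos [Nonempty V]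
    (hreg : G.IsRegularOfDegree k) (hk : 0 < k) (hlam : secondEigenvalue G ≤ 0) :
    ∃ i₀, (adjMatrix_isHermitian G).eigenvalues i₀ = k ∧
      ∀ i ≠ i₀, (adjMatrix_isHermitian G).eigenvalues i ≤ 0 := by
  obtain ⟨i₀, hi₀⟩ := hreg.exists_eigenvalues_eq
  exact ⟨i₀, hi₀, fun i hi =>
    eigenvalues_nonpos_of_secondEigenvalue_nonpos hlam hi.symm (by rw [hi₀]; exact_mod_cast hk)⟩

lemma IsRegularOfDegree.card_le_of_secondEigenvalue_nonpos (hreg : G.IsRegularOfDegree k)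
    (hk : 0 < k) (hlam : secondEigenvalue G ≤ 0) : Fintype.card V ≤ 2 * k := by
  rcases isEmpty_or_nonempty V with _ | _
  · simp
  obtain ⟨i₀, hi₀, hneg⟩ := hreg.exists_eigenvalues_eq_of_secondEigenvalue_nonpos hk hlam
  have hle := sum_sq_le_of_sum_eq_zero hneg (sum_eigenvalues_adjMatrix G)
  rw [hreg.sum_eigenvalues_sq, hi₀] at hle
  have hkR : (0 : ℝ) < k := by exact_mod_cast hk
  exact_mod_cast le_of_mul_le_mul_right (by linarith : (Fintype.card V : ℝ) * k ≤ 2 * k * k) hkR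

lemma IsRegularOfDegree.cliqueFree_three_of_secondEigenvalue_nonpos
    (hreg : G.IsRegularOfDegree k) (hk : 0 < k) (hlam : secondEigenvalue G ≤ 0)
    (hcard : Fintype.card V = 2 * k) : G.CliqueFree 3 := by
  have : Nonempty V := Fintype.card_pos_iff.mp (by omega)
  obtain ⟨i₀, hi₀, hneg⟩ := hreg.exists_eigenvalues_eq_of_secondEigenvalue_nonpos hk hlam
  refine cliqueFree_three_of_sum_eigenvalues_pow_three
    (sum_pow_three_eq_zero_of_sum_sq_eq hneg (sum_eigenvalues_adjMatrix G) ?_)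
  rw [hreg.sum_eigenvalues_sq, hi₀, hcard]
  push_cast
  ring

end SimpleGraph

theorem stmt1_general {V : Type*} [Fintype V] [DecidableEq V] (k : ℕ) (hk : 1 ≤ k)
    (G : SimpleGraph V) [DecidableRel G.Adj]
    (hreg : G.IsRegularOfDegree k)
    (hlam : secondEigenvalue G ≤ 0) :
    Fintype.card V ≤ 2 * k ∧
      (Fintype.card V = 2 * k ↔
        Nonempty (G ≃g completeBipartiteGraph (Fin k) (Fin k))) := by
  refine ⟨hreg.card_le_of_secondEigenvalue_nonpos hk hlam, fun hcard => ?_, fun ⟨e⟩ => ?_⟩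
  · have : Nonempty V := Fintype.card_pos_iff.mp (by omega)
    exact hreg.nonempty_iso_completeBipartiteGraph
      (hreg.cliqueFree_three_of_secondEigenvalue_nonpos hk hlam hcard) hcard
  · simp [Fintype.card_congr e.toEquiv, two_mul]

theorem stmt1 {V : Type*} [Fintype V] [DecidableEq V] (k : ℕ) (hk : 1 ≤ k)
    (G : SimpleGraph V) [DecidableRel G.Adj]
    (hconn : G.Connected) (hreg : G.IsRegularOfDegree k)
    (hlam : secondEigenvalue G ≤ 0) :
    Fintype.card V ≤ 2 * k ∧
      (Fintype.card V = 2 * k ↔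
        Nonempty (G ≃g completeBipartiteGraph (Fin k) (Fin k))) :=
  stmt1_general k hk G hreg hlam
end

section
/- (Linear programming bound.) Let G be a connected k-regular finite simple graph on v vertices whose distinct adjacency eigenvalues are λ₁ = k, λ₂, …, λ_n. Suppose f is a real polynomial, written as f(x) = Σ_{i≥0} f_i F_i^{(k)}(x) in the basis of the polynomials F_i^{(k)}, such that f(k) > 0, f(λ_i) ≤ 0 for every i ≥ 2, f₀ > 0, and f_i ≥ 0 for every i ≥ 1. Then v ≤ f(k)/f₀. -/
open Polynomial

/-!
Compute `tr f(A)` for the adjacency matrix `A` in two ways. Spectrally it is `∑ f(λ)` over the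
eigenvalues with multiplicity; since `G` is connected, `k` is a simple eigenvalue, so the sum is
at most `f(k)`. Combinatorially, `F_{i+1}(A) = S Bⁱ T`, where `B` is the non-backtracking matrix
on darts and `S`, `T` record the tail and head of a dart (both sides satisfy the same three-term
recurrence). Hence `F_i(A)` is entrywise nonnegative for `i ≥ 1`, and
`tr f(A) ≥ f₀ tr F₀(A) = f₀ v`.
-/

open Matrix Finset

theorem Matrix.mul_apply_nonneg {l m n α : Type*} [Fintype m] [Semiring α] [PartialOrder α]
    [IsOrderedRing α] {A : Matrix l m α} {B : Matrix m n α} (hA : ∀ i j, 0 ≤ A i j)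
    (hB : ∀ i j, 0 ≤ B i j) (i : l) (j : n) : 0 ≤ (A * B) i j :=
  sum_nonneg fun _ _ => mul_nonneg (hA _ _) (hB _ _)

theorem Matrix.IsHermitian.trace_aeval {n : Type*} [Fintype n] [DecidableEq n]
    {A : Matrix n n ℝ} (hA : A.IsHermitian) (p : ℝ[X]) :
    (aeval A p).trace = ∑ i, p.eval (hA.eigenvalues i) := by
  conv_lhs => rw [hA.spectral_theorem]
  rw [aeval_algHom_apply (F := Matrix n n ℝ ≃⋆ₐ[ℝ] Matrix n n ℝ), Unitary.conjStarAlgAut_apply,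
    trace_mul_cycle, Unitary.coe_star_mul_self, one_mul,
    show diagonal (RCLike.ofReal ∘ hA.eigenvalues) = diagonalAlgHom ℝ hA.eigenvalues from rfl,
    aeval_algHom_apply, diagonalAlgHom_apply, trace_diagonal]
  simp [aeval_pi]

theorem Orthonormal.eq_of_forall_apply_eq {V ι : Type*} [Fintype V]
    {e : ι → EuclideanSpace ℝ V} (he : Orthonormal ℝ e) {i j : ι}
    (hi : ∀ u v, e i u = e i v) (hj : ∀ u v, e j u = e j v) : i = j := by
  obtain ⟨u₀, -⟩ : ∃ u, e i u ≠ 0 := by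
    by_contra! h
    exact he.ne_zero i (by ext u; exact h u)
  have inner_eq : ∀ l m, (∀ u, e l u = e l u₀) → (∀ u, e m u = e m u₀) →
      inner ℝ (e l) (e m) = Fintype.card V * (e l u₀ * e m u₀) := by
    intro l m hl hm
    simp [PiLp.inner_apply, hl, hm, mul_comm]
  by_contra hij
  -- constant vectors are parallel, so Cauchy–Schwarz is an equality: `⟪eᵢ, eⱼ⟫² = ‖eᵢ‖² ‖eⱼ‖²`
  have h₀ := inner_eq i j (hi · u₀) (hj · u₀)
  have h₁ := inner_eq i i (hi · u₀) (hi · u₀)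
  have h₂ := inner_eq j j (hj · u₀) (hj · u₀)
  rw [he.inner_eq_zero hij] at h₀
  rw [real_inner_self_eq_norm_sq, he.1 i] at h₁
  rw [real_inner_self_eq_norm_sq, he.1 j] at h₂
  have : (Fintype.card V * (e i u₀ * e j u₀)) ^ 2 =
      (Fintype.card V * (e i u₀ * e i u₀)) * (Fintype.card V * (e j u₀ * e j u₀)) := by ring
  rw [← h₀, ← h₁, ← h₂] at this
  norm_num at this

theorem sum_comp_le_of_card_fiber_le_one {ι : Type*} [Fintype ι] (μ : ι → ℝ) (g : ℝ → ℝ) (c : ℝ)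
    (hcard : #{i | μ i = c} ≤ 1) (hc : 0 ≤ g c) (hneg : ∀ i, μ i ≠ c → g (μ i) ≤ 0) :
    ∑ i, g (μ i) ≤ g c := by
  rw [← sum_filter_add_sum_filter_not univ (μ · = c)]
  have hfiber : ∑ i ∈ univ with μ i = c, g (μ i) ≤ g c := by
    rw [sum_congr rfl fun i hi => by rw [(mem_filter.1 hi).2], sum_const, nsmul_eq_mul]
    exact mul_le_of_le_one_left hc (by exact_mod_cast hcard)
  have hrest : ∑ i ∈ univ with ¬μ i = c, g (μ i) ≤ 0 :=
    sum_nonpos fun i hi => hneg i (mem_filter.1 hi).2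
  linarith

namespace SimpleGraph

variable {V : Type*} [Fintype V] [DecidableEq V] {G : SimpleGraph V} [DecidableRel G.Adj]

theorem card_darts_fst_snd (u v : V) :
    #{d : G.Dart | d.fst = u ∧ d.snd = v} = if G.Adj u v then 1 else 0 := by
  split_ifs with h
  · exact card_eq_one.mpr ⟨⟨(u, v), h⟩, by ext d; simp [Dart.ext_iff, Prod.ext_iff]⟩
  · exact card_eq_zero.mpr <| filter_eq_empty_iff.mpr fun d _ ⟨hu, hv⟩ => h (hu ▸ hv ▸ d.adj)

theorem card_darts_snd (v : V) : #{d : G.Dart | d.snd = v} = G.degree v := by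
  rw [← dart_fst_fiber_card_eq_degree]
  exact card_equiv (Dart.symm_involutive.toPerm _) (by simp)

theorem card_darts_snd_ne_fst_add_one (e : G.Dart) :
    #{d : G.Dart | d.snd = e.fst ∧ e.snd ≠ d.fst} + 1 = G.degree e.fst := by
  rw [← card_darts_snd, ← card_erase_add_one (s := {d : G.Dart | d.snd = e.fst}) (a := e.symm)
    (by simp)]
  congr 2
  ext d
  simp only [mem_filter, mem_univ, true_and, mem_erase, ne_eq, Dart.ext_iff, Prod.ext_iff,
    Dart.symm_toProd, Prod.fst_swap, Prod.snd_swap]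
  tauto

theorem Connected.apply_eq_of_adjMatrix_mulVec_eq_smul (hconn : G.Connected) {k : ℕ}
    (hreg : G.IsRegularOfDegree k) {x : V → ℝ} (hx : G.adjMatrix ℝ *ᵥ x = (k : ℝ) • x)
    (u v : V) : x u = x v := by
  have hlap : G.lapMatrix ℝ *ᵥ x = 0 := by
    ext w
    simp [lapMatrix, sub_mulVec, degMatrix_mulVec_apply, hx, hreg.degree_eq]
  exact (lapMatrix_mulVec_eq_zero_iff_forall_reachable G).mp hlap u v (hconn u v)

theorem Connected.card_eigenvalues_eq_le_one (hconn : G.Connected) {k : ℕ}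
    (hreg : G.IsRegularOfDegree k) (hA : (G.adjMatrix ℝ).IsHermitian) :
    #{i | hA.eigenvalues i = k} ≤ 1 := by
  have hconst : ∀ i, hA.eigenvalues i = k →
      ∀ u v, hA.eigenvectorBasis i u = hA.eigenvectorBasis i v :=
    fun i hi => hconn.apply_eq_of_adjMatrix_mulVec_eq_smul hreg
      (by rw [hA.mulVec_eigenvectorBasis, hi])
  refine card_le_one.mpr fun i hi j hj => ?_
  exact hA.eigenvectorBasis.orthonormal.eq_of_forall_apply_eq
    (hconst i (mem_filter.1 hi).2) (hconst j (mem_filter.1 hj).2)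

variable (R : Type*) (G)

def dartTailMatrix [Zero R] [One R] : Matrix V G.Dart R :=
  of fun u d => if d.fst = u then 1 else 0

def dartHeadMatrix [Zero R] [One R] : Matrix G.Dart V R :=
  of fun d v => if d.snd = v then 1 else 0

def nonBacktrackingMatrix [Zero R] [One R] : Matrix G.Dart G.Dart R :=
  of fun d e => if d.snd = e.fst ∧ e.snd ≠ d.fst then 1 else 0

section Semiring

variable [NonAssocSemiring R]

theorem dartTailMatrix_mul_dartHeadMatrix :
    G.dartTailMatrix R * G.dartHeadMatrix R = G.adjMatrix R := by
  ext u v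
  simp only [dartTailMatrix, dartHeadMatrix, mul_apply, of_apply, ite_zero_mul_ite_zero, mul_one,
    sum_boole, card_darts_fst_snd, adjMatrix_apply]
  split_ifs <;> simp

theorem adjMatrix_mul_dartTailMatrix :
    G.adjMatrix R * G.dartTailMatrix R =
      G.dartTailMatrix R * G.nonBacktrackingMatrix R + (G.dartHeadMatrix R)ᵀ := by
  ext u e
  have hA : (G.adjMatrix R * G.dartTailMatrix R) u e = if G.Adj u e.fst then 1 else 0 := by
    simp [mul_apply, dartTailMatrix]
  rw [Matrix.add_apply, hA]
  simp only [dartTailMatrix, dartHeadMatrix, nonBacktrackingMatrix, mul_apply, of_apply,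
    ite_zero_mul_ite_zero, mul_one, sum_boole, transpose_apply]
  by_cases h : e.snd = u
  · subst h
    rw [if_pos e.adj.symm, if_pos rfl, card_eq_zero.mpr (filter_eq_empty_iff.mpr ?_),
      Nat.cast_zero, zero_add]
    rintro d - ⟨hd, -, hne⟩
    exact hne hd.symm
  · rw [if_neg h, add_zero, filter_congr (q := fun d : G.Dart => d.fst = u ∧ d.snd = e.fst),
      card_darts_fst_snd]
    · split_ifs <;> simp
    · rintro d -
      refine ⟨fun hd => ⟨hd.1, hd.2.1⟩, ?_⟩
      rintro ⟨rfl, hd⟩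
      exact ⟨rfl, hd, h⟩

theorem transpose_dartHeadMatrix_mul_dartHeadMatrix {k : ℕ} (hreg : G.IsRegularOfDegree k) :
    (G.dartHeadMatrix R)ᵀ * G.dartHeadMatrix R = (k : R) • 1 := by
  ext u v
  simp only [dartHeadMatrix, mul_apply, of_apply, transpose_apply, ite_zero_mul_ite_zero, mul_one,
    sum_boole, Matrix.smul_apply, one_apply, smul_ite, smul_zero]
  split_ifs with h
  · subst h
    simp [card_darts_snd, hreg.degree_eq]
  · rw [card_eq_zero.mpr (filter_eq_empty_iff.mpr ?_), Nat.cast_zero]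
    rintro d - ⟨rfl, rfl⟩
    exact h rfl

end Semiring

theorem transpose_dartHeadMatrix_mul_nonBacktrackingMatrix [Ring R] {k : ℕ}
    (hreg : G.IsRegularOfDegree k) :
    (G.dartHeadMatrix R)ᵀ * G.nonBacktrackingMatrix R = ((k : R) - 1) • G.dartTailMatrix R := by
  ext u e
  simp only [dartHeadMatrix, nonBacktrackingMatrix, dartTailMatrix, mul_apply, of_apply,
    transpose_apply, ite_zero_mul_ite_zero, mul_one, sum_boole, Matrix.smul_apply, smul_eq_mul]
  split_ifs with h
  · subst h
    simp only [and_self_left]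
    rw [mul_one, eq_sub_iff_add_eq]
    exact mod_cast congrArg (Nat.cast : ℕ → R)
      ((card_darts_snd_ne_fst_add_one e).trans (hreg e.fst))
  · rw [card_eq_zero.mpr (filter_eq_empty_iff.mpr ?_), Nat.cast_zero, mul_zero]
    rintro d - ⟨rfl, hd, -⟩
    exact h hd.symm

variable {G}

theorem aeval_adjMatrix_Fpoly_succ {k : ℕ} (hreg : G.IsRegularOfDegree k) (i : ℕ) :
    aeval (G.adjMatrix ℝ) (Fpoly k (i + 1)) =
      G.dartTailMatrix ℝ * G.nonBacktrackingMatrix ℝ ^ i * G.dartHeadMatrix ℝ := by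
  set S := G.dartTailMatrix ℝ
  set B := G.nonBacktrackingMatrix ℝ
  set T := G.dartHeadMatrix ℝ
  have hST : S * T = G.adjMatrix ℝ := G.dartTailMatrix_mul_dartHeadMatrix ℝ
  have hAS : G.adjMatrix ℝ * S = S * B + Tᵀ := G.adjMatrix_mul_dartTailMatrix ℝ
  have hAS_pow : ∀ n, G.adjMatrix ℝ * (S * B ^ (n + 1)) =
      S * B ^ (n + 2) + ((k : ℝ) - 1) • (S * B ^ n) := by
    intro n
    rw [← Matrix.mul_assoc, hAS, Matrix.add_mul, Matrix.mul_assoc, ← pow_succ', pow_succ' B n,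
      ← Matrix.mul_assoc Tᵀ, G.transpose_dartHeadMatrix_mul_nonBacktrackingMatrix ℝ hreg,
      Matrix.smul_mul]
  induction i using Nat.twoStepInduction with
  | zero => simp [Fpoly, hST]
  | one =>
    have h2 : aeval (G.adjMatrix ℝ) (Fpoly k 2) =
        G.adjMatrix ℝ * G.adjMatrix ℝ - (k : ℝ) • 1 := by
      rw [show Fpoly k 2 = X ^ 2 - C (k : ℝ) from rfl, map_sub, map_pow, aeval_X, aeval_C,
        Algebra.algebraMap_eq_smul_one, sq]
    rw [h2, ← hST, ← Matrix.mul_assoc, hST, hAS, Matrix.add_mul,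
      G.transpose_dartHeadMatrix_mul_dartHeadMatrix ℝ hreg, add_sub_cancel_right, pow_one]
  | more n ih₁ ih₂ =>
    rw [show Fpoly k (n + 2 + 1) =
        X * Fpoly k (n + 2) - C ((k : ℝ) - 1) * Fpoly k (n + 1) from rfl,
      map_sub, map_mul, map_mul, aeval_X, aeval_C, ih₁, ih₂, ← Algebra.smul_def,
      ← Matrix.mul_assoc (G.adjMatrix ℝ), hAS_pow, Matrix.add_mul,
      Matrix.smul_mul, add_sub_cancel_right]

theorem trace_aeval_adjMatrix_Fpoly_succ_nonneg {k : ℕ} (hreg : G.IsRegularOfDegree k) (i : ℕ) :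
    0 ≤ (aeval (G.adjMatrix ℝ) (Fpoly k (i + 1))).trace := by
  have hind : ∀ (p : Prop) [Decidable p], (0 : ℝ) ≤ if p then 1 else 0 :=
    fun _ _ => ite_nonneg zero_le_one le_rfl
  rw [aeval_adjMatrix_Fpoly_succ hreg]
  exact sum_nonneg fun u _ => mul_apply_nonneg
    (mul_apply_nonneg (fun _ _ => hind _) (pow_apply_nonneg (fun _ _ => hind _) i))
    (fun _ _ => hind _) u u

theorem mul_card_le_trace_aeval_adjMatrix {k : ℕ} (hreg : G.IsRegularOfDegree k) (m : ℕ)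
    (a : ℕ → ℝ) (hai : ∀ i, 1 ≤ i → 0 ≤ a i) :
    a 0 * Fintype.card V ≤
      (aeval (G.adjMatrix ℝ) (∑ i ∈ range (m + 1), C (a i) * Fpoly k i)).trace := by
  simp only [map_sum, map_mul, aeval_C, ← Algebra.smul_def, trace_sum, trace_smul, smul_eq_mul]
  rw [sum_range_succ']
  have htail : 0 ≤ ∑ i ∈ range m, a (i + 1) * (aeval (G.adjMatrix ℝ) (Fpoly k (i + 1))).trace :=
    sum_nonneg fun i _ => mul_nonneg (hai _ (Nat.le_add_left 1 i))
      (trace_aeval_adjMatrix_Fpoly_succ_nonneg hreg i)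
  rw [show Fpoly k 0 = 1 from rfl, map_one, trace_one]
  linarith

end SimpleGraph

theorem stmt2_general {V : Type*} [Fintype V] [DecidableEq V] (k : ℕ)
    (G : SimpleGraph V) [DecidableRel G.Adj]
    (hconn : G.Connected) (hreg : G.IsRegularOfDegree k)
    (m : ℕ) (a : ℕ → ℝ) (f : Polynomial ℝ)
    (hf : f = ∑ i ∈ Finset.range (m + 1), C (a i) * Fpoly k i)
    (hfk : 0 < f.eval (k : ℝ))
    (hfneg : ∀ μ ∈ Finset.image (adjMatrix_isHermitian G).eigenvalues Finset.univ,
        μ ≠ (k : ℝ) → f.eval μ ≤ 0)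
    (ha0 : 0 < a 0) (hai : ∀ i, 1 ≤ i → 0 ≤ a i) :
    (Fintype.card V : ℝ) ≤ f.eval (k : ℝ) / a 0 := by
  set hA := adjMatrix_isHermitian G
  have hlower : a 0 * Fintype.card V ≤ (aeval (G.adjMatrix ℝ) f).trace :=
    hf ▸ SimpleGraph.mul_card_le_trace_aeval_adjMatrix hreg m a hai
  have hupper : (aeval (G.adjMatrix ℝ) f).trace ≤ f.eval (k : ℝ) := by
    rw [hA.trace_aeval]
    exact sum_comp_le_of_card_fiber_le_one hA.eigenvalues f.eval k
      (hconn.card_eigenvalues_eq_le_one hreg hA) hfk.le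
      fun i hi => hfneg _ (mem_image_of_mem _ (mem_univ i)) hi
  rw [le_div_iff₀ ha0]
  linarith

theorem stmt2 {V : Type*} [Fintype V] [DecidableEq V] (k : ℕ) (hk : 2 ≤ k)
    (G : SimpleGraph V) [DecidableRel G.Adj]
    (hconn : G.Connected) (hreg : G.IsRegularOfDegree k)
    (m : ℕ) (a : ℕ → ℝ) (f : Polynomial ℝ)
    (hf : f = ∑ i ∈ Finset.range (m + 1), C (a i) * Fpoly k i)
    (hfk : 0 < f.eval (k : ℝ))
    (hfneg : ∀ μ ∈ Finset.image (adjMatrix_isHermitian G).eigenvalues Finset.univ,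
        μ ≠ (k : ℝ) → f.eval μ ≤ 0)
    (ha0 : 0 < a 0) (hai : ∀ i, 1 ≤ i → 0 ≤ a i) :
    (Fintype.card V : ℝ) ≤ f.eval (k : ℝ) / a 0 :=
  stmt2_general k G hconn hreg m a f hf hfk hfneg ha0 hai
end

section
/- Let k ≥ 3 and t ≥ 2 be integers and c > 0 a real number, and let λ₂ denote the second largest eigenvalue of the tridiagonal matrix T(k,t,c). Then every connected k-regular finite simple graph G whose second largest adjacency eigenvalue satisfies λ₂(G) ≤ λ₂ has at most M(k,t,c) = 1 + Σ_{i=0}^{t−3} k(k−1)^i + k(k−1)^{t−2}/c vertices. -/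
open Polynomial

/-!
Write `A` for the adjacency matrix, `n = |V|`, `s = t - 2`, `θ = lam2` and
`W = (c - 1) G_s + G_{s+1} = c G_s + F_{s+1}`. The matrix `F_j(A)` counts non-backtracking walks
of length `j`, so it is symmetric with entries in `ℕ` and row sums `F_j(k)`; hence
`tr (F_i(A) F_j(A)) ≥ 0` and `tr (F_j(A)²) ≥ n F_j(k)`. The three-term recurrence makes the largest
roots of the polynomials `(c - 1) G_m + G_{m+1}` increase with `m`, and this shows that the
quotient `r = W / (X - θ)` is a nonnegative combination of `F_0, …, F_s`. Now `f = W r = (X - θ) r²`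
is `≤ 0` left of `θ`, where all eigenvalues but the top one `k` lie, so
`tr f(A) = ∑ f(λ_i) ≤ f(k) = c M r(k)`, whereas expanding `W` and `r` in the `F_j` gives
`tr f(A) ≥ c n r(k)`. Hence `n ≤ M`.
-/

open Filter

namespace Polynomial

theorem exists_isRoot_ge_of_eval_nonpos {p : ℝ[X]}
    (hp : Tendsto (fun x => p.eval x) atTop atTop) {x₀ : ℝ} (hx₀ : p.eval x₀ ≤ 0) :
    ∃ z, x₀ ≤ z ∧ p.IsRoot z := by
  obtain ⟨B, hB, hxB⟩ := ((hp.eventually_ge_atTop 0).and (eventually_ge_atTop x₀)).exists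
  obtain ⟨z, hz, hz0⟩ := intermediate_value_Icc hxB p.continuous.continuousOn ⟨hx₀, hB⟩
  exact ⟨z, hz.1, hz0⟩

theorem exists_isRoot_ge_and_eval_pos {p : ℝ[X]}
    (hp : Tendsto (fun x => p.eval x) atTop atTop) {x₀ : ℝ} (hx₀ : p.eval x₀ ≤ 0) :
    ∃ z, x₀ ≤ z ∧ p.IsRoot z ∧ ∀ x, z < x → 0 < p.eval x := by
  have hp0 : p ≠ 0 := by
    rintro rfl
    exact not_tendsto_const_atTop (0 : ℝ) atTop (by simpa using hp)
  obtain ⟨z₀, hxz₀, hz₀⟩ := exists_isRoot_ge_of_eval_nonpos hp hx₀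
  have hmem : ∀ y, y ∈ p.roots.toFinset ↔ p.IsRoot y := by simp [hp0]
  have hne : p.roots.toFinset.Nonempty := ⟨z₀, (hmem z₀).2 hz₀⟩
  refine ⟨_, hxz₀.trans (p.roots.toFinset.le_max' _ ((hmem z₀).2 hz₀)),
    (hmem _).1 (p.roots.toFinset.max'_mem hne), fun x hx => ?_⟩
  by_contra! hpx
  obtain ⟨y, hxy, hy⟩ := exists_isRoot_ge_of_eval_nonpos hp hpx
  exact (hx.trans_le hxy).not_ge (p.roots.toFinset.le_max' _ ((hmem y).2 hy))

end Polynomial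

namespace ThreeTermRecurrence

variable {w : ℕ → ℝ[X]} {b : ℝ} (hw : ∀ m, w (m + 2) = X * w (m + 1) - C b * w m)
include hw

theorem monic_and_natDegree (h0 : (w 0).Monic ∧ (w 0).natDegree = 1)
    (h1 : (w 1).Monic ∧ (w 1).natDegree = 2) : ∀ m, (w m).Monic ∧ (w m).natDegree = m + 1
  | 0 => h0
  | 1 => h1
  | m + 2 => by
    obtain ⟨hm₁, hd₁⟩ := monic_and_natDegree h0 h1 (m + 1)
    have hd₀ := (monic_and_natDegree h0 h1 m).2
    have hXw : (X * w (m + 1)).natDegree = m + 3 := by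
      rw [monic_X.natDegree_mul hm₁, natDegree_X, hd₁]; ring
    have hlt : (C b * w m).natDegree < (X * w (m + 1)).natDegree := by
      rw [hXw]; exact (natDegree_C_mul_le b (w m)).trans_lt (by omega)
    rw [hw m]
    exact ⟨(monic_X.mul hm₁).sub_of_left (degree_lt_degree hlt),
      by rw [natDegree_sub_eq_left_of_natDegree_lt hlt, hXw]⟩

variable (hb : 0 < b) (htend : ∀ m, Tendsto (fun x => (w m).eval x) atTop atTop)
  (hbase : ∃ x₀, (w 1).eval x₀ ≤ 0 ∧ ∀ y, x₀ ≤ y → 0 < (w 0).eval y)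
include hb htend hbase

/-- At the largest root `z` of `w (m + 1)`, `w (m + 2) = -b w m < 0`, so the largest root of
`w (m + 2)` lies strictly to the right of `z`. -/
theorem exists_isRoot_and_eval_pos : ∀ m, ∃ z, (w (m + 1)).IsRoot z ∧
    (∀ x, z < x → 0 < (w (m + 1)).eval x) ∧ ∀ j ≤ m, ∀ y, z ≤ y → 0 < (w j).eval y
  | 0 => by
    obtain ⟨x₀, hx₀, hpos⟩ := hbase
    obtain ⟨z, hxz, hz, hzpos⟩ := exists_isRoot_ge_and_eval_pos (htend 1) hx₀
    exact ⟨z, hz, hzpos, fun j hj y hy => by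
      obtain rfl : j = 0 := by omega
      exact hpos y (hxz.trans hy)⟩
  | m + 1 => by
    obtain ⟨z, hz, hzpos, hjpos⟩ := exists_isRoot_and_eval_pos m
    have hneg : (w (m + 2)).eval z < 0 := by
      have := hjpos m le_rfl z le_rfl
      rw [hw, eval_sub, eval_mul, eval_mul, eval_X, eval_C, hz.eq_zero]
      nlinarith
    obtain ⟨z', hzz', hz', hz'pos⟩ := exists_isRoot_ge_and_eval_pos (htend (m + 2)) hneg.le
    have hlt : z < z' := hzz'.lt_of_ne (by rintro rfl; exact hneg.ne hz'.eq_zero)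
    refine ⟨z', hz', hz'pos, fun j hj y hy => ?_⟩
    rcases hj.lt_or_eq with hj | rfl
    · exact hjpos j (by omega) y (hzz'.trans hy)
    · exact hzpos y (hlt.trans_le hy)

theorem eval_pos_of_forall_isRoot_le {s : ℕ} {θ : ℝ} (hθ : ∀ x, (w s).IsRoot x → x ≤ θ)
    {j : ℕ} (hj : j < s) : 0 < (w j).eval θ := by
  obtain ⟨m, rfl⟩ : ∃ m, s = m + 1 := ⟨s - 1, by omega⟩
  obtain ⟨z, hz, -, hpos⟩ := exists_isRoot_and_eval_pos hw hb htend hbase m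
  exact hpos j (by omega) θ (hθ z hz)

end ThreeTermRecurrence

section Fpoly

variable (k : ℕ)

theorem Fpoly_eval_natCast_succ : ∀ j, (Fpoly k (j + 1)).eval (k : ℝ) = k * (k - 1) ^ j
  | 0 => by simp [Fpoly]
  | 1 => by
    simp only [Fpoly, map_natCast, eval_sub, eval_pow, eval_X, eval_natCast, pow_one]
    ring
  | j + 2 => by
    simp only [Fpoly, eval_sub, eval_mul, eval_X, eval_C, Fpoly_eval_natCast_succ (j + 1),
      Fpoly_eval_natCast_succ j]
    ring

theorem Gpoly_succ (i : ℕ) : Gpoly k (i + 1) = Gpoly k i + Fpoly k (i + 1) :=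
  Finset.sum_range_succ _ _

theorem Gpoly_add_two : ∀ i, Gpoly k (i + 2) = X * Gpoly k (i + 1) - C ((k : ℝ) - 1) * Gpoly k i
  | 0 => by
    simp only [Gpoly, Finset.sum_range_succ, Finset.range_one, Finset.sum_singleton, Fpoly,
      map_natCast, map_sub, map_one]
    ring
  | i + 1 => by
    have hF (j : ℕ) : Fpoly k (j + 1) = Gpoly k (j + 1) - Gpoly k j := by rw [Gpoly_succ]; ring
    have hrec : Fpoly k (i + 3) = X * Fpoly k (i + 2) - C ((k : ℝ) - 1) * Fpoly k (i + 1) := rfl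
    rw [Gpoly_succ k (i + 2), hrec, hF (i + 1), hF i]
    linear_combination Gpoly_add_two i

/-- For `m = t - 2`, the polynomial whose largest root is the second eigenvalue of `T(k, t, c)`. -/
noncomputable def Wpoly (c : ℝ) (m : ℕ) : ℝ[X] := C (c - 1) * Gpoly k m + Gpoly k (m + 1)

variable {k}

theorem Fpoly_eval_natCast_pos (hk : 2 ≤ k) : ∀ j, 0 < (Fpoly k j).eval (k : ℝ)
  | 0 => by simp [Fpoly]
  | j + 1 => by
    have hk' : (2 : ℝ) ≤ k := by exact_mod_cast hk
    rw [Fpoly_eval_natCast_succ]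
    exact mul_pos (by linarith) (pow_pos (by linarith) j)

theorem Wpoly_eq (c : ℝ) (m : ℕ) : Wpoly k c m = C c * Gpoly k m + Fpoly k (m + 1) := by
  rw [Wpoly, Gpoly_succ, C_sub, C_1]; ring

theorem Wpoly_zero (c : ℝ) : Wpoly k c 0 = X + C c := by
  simp [Wpoly_eq, Gpoly, Fpoly, add_comm]

theorem Wpoly_one (c : ℝ) : Wpoly k c 1 = X ^ 2 + C c * X + C (c - k) := by
  simp only [Wpoly_eq, Gpoly, Finset.sum_range_succ, Finset.range_one, Finset.sum_singleton, Fpoly,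
    map_natCast, map_sub]
  ring

theorem Wpoly_add_two (c : ℝ) (m : ℕ) :
    Wpoly k c (m + 2) = X * Wpoly k c (m + 1) - C ((k : ℝ) - 1) * Wpoly k c m := by
  simp only [Wpoly, Gpoly_add_two k m, Gpoly_add_two k (m + 1)]; ring

theorem Wpoly_eval_natCast (c : ℝ) (hc : c ≠ 0) (s : ℕ) :
    (Wpoly k c s).eval (k : ℝ) = c * Mbound k (s + 2) c := by
  have hG : (Gpoly k s).eval (k : ℝ) = 1 + ∑ i ∈ Finset.range s, (k : ℝ) * (k - 1) ^ i := by
    rw [Gpoly, eval_finsetSum, Finset.sum_range_succ']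
    simp [Fpoly, Fpoly_eval_natCast_succ, add_comm]
  rw [Wpoly_eq, eval_add, eval_mul, eval_C, hG, Fpoly_eval_natCast_succ, Mbound,
    Nat.add_sub_cancel]
  field_simp

theorem Wpoly_eval_pos_of_forall_isRoot_le (hk : 2 ≤ k) {c : ℝ} (hc : 0 < c) {s : ℕ} {θ : ℝ}
    (hθ : ∀ x, (Wpoly k c s).IsRoot x → x ≤ θ) {j : ℕ} (hj : j < s) :
    0 < (Wpoly k c j).eval θ := by
  have hk' : (2 : ℝ) ≤ k := by exact_mod_cast hk
  have hdeg := ThreeTermRecurrence.monic_and_natDegree (Wpoly_add_two (k := k) c)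
    ⟨by rw [Wpoly_zero]; exact monic_X_add_C c, by rw [Wpoly_zero]; exact natDegree_X_add_C c⟩
    ⟨by rw [Wpoly_one]; monicity!, by rw [Wpoly_one]; compute_degree!⟩
  refine ThreeTermRecurrence.eval_pos_of_forall_isRoot_le (Wpoly_add_two c) (by linarith)
    (fun m => tendsto_atTop_of_leadingCoeff_nonneg _ ?_ ?_) ⟨-c / 2, ?_, fun y hy => ?_⟩ hθ hj
  · exact natDegree_pos_iff_degree_pos.mp (by rw [(hdeg m).2]; omega)
  · rw [(hdeg m).1.leadingCoeff]; exact zero_le_one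
  -- `W_1(-c/2) = 1 - k - (c/2 - 1)² < 0`, while `W_0 = X + c` is positive from `-c/2` on.
  · simp only [Wpoly_one, eval_add, eval_pow, eval_mul, eval_X, eval_C]
    nlinarith
  · simp only [Wpoly_zero, eval_add, eval_X, eval_C]
    linarith

noncomputable def convFpoly (k : ℕ) (a : ℕ → ℝ) (m : ℕ) : ℝ[X] :=
  ∑ j ∈ Finset.range (m + 1), C (a (m - j)) * Fpoly k j

theorem convFpoly_succ (a : ℕ → ℝ) (m : ℕ) :
    convFpoly k a (m + 1) = convFpoly k (fun i => a (i + 1)) m + C (a 0) * Fpoly k (m + 1) := by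
  rw [convFpoly, Finset.sum_range_succ, Nat.sub_self, convFpoly]
  congr 1
  exact Finset.sum_congr rfl fun j hj => by
    rw [Nat.sub_add_comm (Finset.mem_range_succ_iff.mp hj)]

theorem convFpoly_eval_natCast_pos (hk : 2 ≤ k) {a : ℕ → ℝ} {s : ℕ} (ha : ∀ i ≤ s, 0 ≤ a i)
    (ha0 : 0 < a 0) : 0 < (convFpoly k a s).eval (k : ℝ) := by
  rw [convFpoly, eval_finsetSum, Finset.sum_range_succ, Nat.sub_self, eval_mul, eval_C]
  refine add_pos_of_nonneg_of_pos (Finset.sum_nonneg fun j _ => ?_)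
    (mul_pos ha0 (Fpoly_eval_natCast_pos hk s))
  rw [eval_mul, eval_C]
  exact mul_nonneg (ha _ (Nat.sub_le s j)) (Fpoly_eval_natCast_pos hk j).le

theorem X_mul_convFpoly : ∀ (a : ℕ → ℝ) (m : ℕ), X * convFpoly k a (m + 1) =
    convFpoly k a (m + 2) + C ((k : ℝ) - 1) * convFpoly k a m + C (a m - a (m + 2))
  | a, 0 => by
    simp only [convFpoly, Finset.sum_range_succ, Finset.range_zero, Finset.sum_empty, Fpoly,
      Nat.sub_zero, Nat.sub_self, C_sub, C_1]
    ring
  | a, m + 1 => by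
    rw [convFpoly_succ a (m + 1), convFpoly_succ a (m + 2), convFpoly_succ a m, mul_add,
      X_mul_convFpoly _ m]
    have hrec : Fpoly k (m + 3) = X * Fpoly k (m + 2) - C ((k : ℝ) - 1) * Fpoly k (m + 1) := rfl
    rw [hrec]
    simp only [C_sub, C_1]
    ring

/-- The coefficients of `(W_m - W_m(θ)) / (X - θ)` in the basis `F_j`
(`X_sub_C_mul_convFpoly_quotCoeff`). -/
noncomputable def quotCoeff (k : ℕ) (c θ : ℝ) : ℕ → ℝ
  | 0 => 1
  | 1 => θ + c
  | m + 2 => quotCoeff k c θ m + (Wpoly k c (m + 1)).eval θ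

theorem X_sub_C_mul_convFpoly_quotCoeff (c θ : ℝ) : ∀ m,
    (X - C θ) * convFpoly k (quotCoeff k c θ) m = Wpoly k c m - C ((Wpoly k c m).eval θ)
  | 0 => by
    simp [convFpoly, quotCoeff, Fpoly, Wpoly_zero]
  | 1 => by
    simp only [convFpoly, Finset.sum_range_succ, Finset.range_one, Finset.sum_singleton,
      Nat.sub_zero, Nat.sub_self, quotCoeff, Fpoly, Wpoly_one, map_add, map_sub, map_one,
      map_natCast, map_mul, map_pow, mul_one, one_mul, eval_add, eval_sub, eval_pow, eval_mul,
      eval_X, eval_C, eval_natCast]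
    ring
  | m + 2 => by
    have h := X_mul_convFpoly (k := k) (quotCoeff k c θ) m
    have hq : quotCoeff k c θ (m + 2) = quotCoeff k c θ m + (Wpoly k c (m + 1)).eval θ := rfl
    have ih1 := X_sub_C_mul_convFpoly_quotCoeff c θ (m + 1)
    have ih0 := X_sub_C_mul_convFpoly_quotCoeff c θ m
    rw [hq] at h
    rw [Wpoly_add_two, eval_sub, eval_mul, eval_mul, eval_X, eval_C]
    simp only [C_sub, C_add, C_mul] at h ⊢
    linear_combination -(X - C θ) * h + X * ih1 - (C (k : ℝ) - C 1) * ih0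

theorem quotCoeff_nonneg {c θ : ℝ} {s : ℕ} (hW : ∀ j < s, 0 < (Wpoly k c j).eval θ) :
    ∀ i ≤ s, 0 ≤ quotCoeff k c θ i
  | 0, _ => zero_le_one
  | 1, h => by simpa [quotCoeff, Wpoly_zero] using (hW 0 h).le
  | i + 2, h => add_nonneg (quotCoeff_nonneg hW i (by omega)) (hW (i + 1) (by omega)).le

end Fpoly

open Matrix

namespace Matrix
variable {n : Type*} [Fintype n]

theorem IsSymm.aeval [DecidableEq n] {R : Type*} [CommSemiring R] {A : Matrix n n R}
    (hA : A.IsSymm) (q : R[X]) : (aeval A q).IsSymm := by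
  induction q using Polynomial.induction_on' with
  | add p q hp hq => rw [map_add]; exact hp.add hq
  | monomial j a =>
    rw [aeval_monomial, Algebra.algebraMap_eq_smul_one, smul_mul_assoc, one_mul]
    exact (hA.pow j).smul a

theorem aeval_mulVec_eq_eval_smul [DecidableEq n] {R : Type*} [CommRing R] {A : Matrix n n R}
    {x : n → R} {μ : R} (h : A *ᵥ x = μ • x) (q : R[X]) : aeval A q *ᵥ x = q.eval μ • x := by
  induction q using Polynomial.induction_on with
  | C a => rw [aeval_C, Algebra.algebraMap_eq_smul_one, smul_mulVec, one_mulVec, eval_C]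
  | add p q hp hq => simp [add_mulVec, hp, hq, add_smul]
  | monomial j a ih =>
    rw [pow_succ, ← mul_assoc, map_mul, aeval_X, ← mulVec_mulVec, h, mulVec_smul, ih, smul_smul]
    simp only [eval_mul, eval_C, eval_pow, eval_X]
    ring_nf

theorem trace_mul_nonneg {M N : Matrix n n ℝ} (hM : ∀ i j, 0 ≤ M i j) (hN : ∀ i j, 0 ≤ N i j) :
    0 ≤ (M * N).trace :=
  Finset.sum_nonneg fun i _ => Finset.sum_nonneg fun j _ => mul_nonneg (hM i j) (hN j i)

theorem sum_sum_le_trace_mul_self {E : Matrix n n ℝ} (hE : E.IsSymm)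
    (hnat : ∀ i j, ∃ m : ℕ, E i j = m) : ∑ i, ∑ j, E i j ≤ (E * E).trace := by
  refine Finset.sum_le_sum fun i _ => Finset.sum_le_sum fun j _ => ?_
  obtain ⟨m, hm⟩ := hnat i j
  change E i j ≤ E i j * E j i
  rw [hE.apply i j, hm]
  exact_mod_cast Nat.le_mul_self m

theorem IsHermitian.trace_aeval_s4 [DecidableEq n] {A : Matrix n n ℝ} (hA : A.IsHermitian)
    (q : ℝ[X]) : (aeval A q).trace = ∑ i, q.eval (hA.eigenvalues i) := by
  conv_lhs => rw [hA.spectral_theorem]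
  rw [← StarAlgEquiv.coe_toAlgEquiv, aeval_algEquiv, AlgHom.comp_apply, AlgEquiv.coe_toAlgHom,
    StarAlgEquiv.coe_toAlgEquiv, Unitary.conjStarAlgAut_apply, trace_mul_cycle,
    Unitary.coe_star_mul_self, one_mul, ← diagonalAlgHom_apply (R := ℝ), aeval_algHom_apply,
    aeval_pi_apply]
  simp [trace_diagonal]

end Matrix

theorem List.SortedLE.sum_map_le {l : List ℝ} (hl : l.SortedLE) {k θ : ℝ} (hk : k ∈ l)
    (hmax : ∀ x ∈ l, x ≤ k) (hθ : l.getD (l.length - 2) 0 ≤ θ) {f : ℝ → ℝ}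
    (hf : ∀ x ≤ θ, f x ≤ 0) : (l.map f).sum ≤ f k := by
  have hne : l ≠ [] := List.ne_nil_of_mem hk
  have hlast : l.getLast hne = k := by
    refine le_antisymm (hmax _ (List.getLast_mem hne)) ?_
    obtain ⟨j, hj, rfl⟩ := List.getElem_of_mem hk
    rw [List.getLast_eq_getElem]
    exact hl.getElem_le_getElem_of_le (by omega)
  have hdrop : ∀ x ∈ l.dropLast, x ≤ θ := by
    intro x hx
    obtain ⟨i, hi, rfl⟩ := List.getElem_of_mem hx
    rw [List.length_dropLast] at hi
    rw [List.getElem_dropLast, List.getD_eq_getElem _ _ (by omega)] at *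
    exact (hl.getElem_le_getElem_of_le (by omega)).trans hθ
  rw [← List.dropLast_append_getLast hne, List.map_append, List.sum_append, hlast]
  simp only [List.map_cons, List.map_nil, List.sum_cons, List.sum_nil, add_zero]
  have := List.sum_le_card_nsmul ((l.dropLast).map f) 0 fun y hy => by
    obtain ⟨x, hx, rfl⟩ := List.mem_map.mp hy
    exact hf x (hdrop x hx)
  simpa using this

namespace SimpleGraph
variable {V : Type*} [Fintype V] [DecidableEq V] (G : SimpleGraph V) [DecidableRel G.Adj]
variable (R : Type*)

/-- A dart `a → b` is encoded as the pair `(a, b) : V × V`; entries are weighted by adjacency, so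
pairs that are not edges contribute nothing. -/
def tailMatrix [Zero R] [One R] : Matrix V (V × V) R :=
  of fun u e => if e.1 = u then G.adjMatrix R e.1 e.2 else 0

def headMatrix [Zero R] [One R] : Matrix (V × V) V R :=
  of fun e v => if e.2 = v then G.adjMatrix R e.1 e.2 else 0

def nonbacktrackingMatrix [Zero R] [One R] : Matrix (V × V) (V × V) R :=
  of fun e f => if e.2 = f.1 then (if f.2 = e.1 then 0 else G.adjMatrix R f.1 f.2) else 0

variable {G R} {k : ℕ}

omit [DecidableEq V] in
theorem sum_adjMatrix_apply_left [NonAssocSemiring R] (v : V) :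
    ∑ u, G.adjMatrix R u v = G.degree v := by
  simpa [dotProduct, adjMatrix_apply, adj_comm] using G.adjMatrix_dotProduct v (fun _ => (1 : R))

theorem tailMatrix_mul_headMatrix [NonAssocSemiring R] :
    G.tailMatrix R * G.headMatrix R = G.adjMatrix R := by
  ext u v
  simp only [mul_apply, Fintype.sum_prod_type, tailMatrix, headMatrix, of_apply, ite_mul, mul_ite,
    zero_mul, mul_zero, Finset.sum_ite_eq', Finset.mem_univ, if_true]
  by_cases h : G.Adj u v <;> simp [adjMatrix_apply, h]

theorem headMatrix_transpose_mul_headMatrix [NonAssocSemiring R]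
    (hreg : G.IsRegularOfDegree k) : (G.headMatrix R)ᵀ * G.headMatrix R = (k : R) • 1 := by
  ext u v
  simp only [mul_apply, Fintype.sum_prod_type, headMatrix, of_apply, transpose_apply, ite_mul,
    mul_ite, zero_mul, mul_zero, Finset.sum_ite_irrel, Finset.sum_ite_eq', Finset.mem_univ,
    if_true, Matrix.smul_apply, one_apply, smul_ite, smul_zero]
  obtain rfl | huv := eq_or_ne v u
  · have hsq (x : V) : G.adjMatrix R x v * G.adjMatrix R x v = G.adjMatrix R x v := by
      by_cases h : G.Adj x v <;> simp [adjMatrix_apply, h]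
    simp only [hsq, sum_adjMatrix_apply_left, hreg v, if_true, smul_eq_mul, mul_one]
  · simp [huv, huv.symm]

theorem tailMatrix_mul_nonbacktrackingMatrix [NonAssocRing R] :
    G.tailMatrix R * G.nonbacktrackingMatrix R
      = G.adjMatrix R * G.tailMatrix R - (G.headMatrix R)ᵀ := by
  ext u ⟨b, c⟩
  simp only [mul_apply, Fintype.sum_prod_type, tailMatrix, headMatrix, nonbacktrackingMatrix,
    of_apply, transpose_apply, Matrix.sub_apply, ite_mul, mul_ite, zero_mul, mul_zero,
    Finset.sum_ite_eq, Finset.sum_ite_eq', Finset.mem_univ, if_true]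
  rw [Fintype.sum_eq_single u fun a ha => by simp [ha]]
  obtain rfl | hcu := eq_or_ne c u
  · by_cases h : G.Adj b c
    · simp [adjMatrix_apply, h, h.symm]
    · simp [adjMatrix_apply, h]
  · simp [hcu]

theorem headMatrix_transpose_mul_nonbacktrackingMatrix [NonAssocRing R]
    (hreg : G.IsRegularOfDegree k) :
    (G.headMatrix R)ᵀ * G.nonbacktrackingMatrix R = ((k : R) - 1) • G.tailMatrix R := by
  ext u ⟨b, c⟩
  simp only [mul_apply, Fintype.sum_prod_type, tailMatrix, headMatrix, nonbacktrackingMatrix,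
    of_apply, transpose_apply, Matrix.smul_apply, ite_mul, mul_ite, zero_mul, mul_zero,
    Finset.sum_ite_eq', Finset.mem_univ, if_true]
  obtain rfl | hbu := eq_or_ne b u
  · by_cases hbc : G.Adj b c
    · have hA : G.adjMatrix R b c = 1 := by simp [hbc]
      have hA' : G.adjMatrix R c b = 1 := by simp [hbc.symm]
      simp only [hA, mul_one, if_true, Finset.sum_ite, Finset.filter_ne, Finset.sum_const_zero,
        zero_add, Finset.sum_erase_eq_sub (Finset.mem_univ c), sum_adjMatrix_apply_left, hreg b,
        hA', smul_eq_mul]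
    · simp [adjMatrix_apply, hbc]
  · simp [hbu]

omit [Fintype V] in
theorem map_tailMatrix {S : Type*} [NonAssocSemiring R] [NonAssocSemiring S] (f : R →+* S) :
    (G.tailMatrix R).map f = G.tailMatrix S := by
  ext; simp [tailMatrix, adjMatrix_apply, apply_ite f]

omit [Fintype V] in
theorem map_headMatrix {S : Type*} [NonAssocSemiring R] [NonAssocSemiring S] (f : R →+* S) :
    (G.headMatrix R).map f = G.headMatrix S := by
  ext; simp [headMatrix, adjMatrix_apply, apply_ite f]

omit [Fintype V] in
theorem map_nonbacktrackingMatrix {S : Type*} [NonAssocSemiring R] [NonAssocSemiring S]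
    (f : R →+* S) : (G.nonbacktrackingMatrix R).map f = G.nonbacktrackingMatrix S := by
  ext; simp [nonbacktrackingMatrix, adjMatrix_apply, apply_ite f]

/-- `F_{j+1}(A)` counts the non-backtracking walks of length `j + 1`. -/
theorem aeval_Fpoly_succ (hreg : G.IsRegularOfDegree k) : ∀ j,
    aeval (G.adjMatrix ℝ) (Fpoly k (j + 1))
      = G.tailMatrix ℝ * G.nonbacktrackingMatrix ℝ ^ j * G.headMatrix ℝ
  | 0 => by simp [Fpoly, tailMatrix_mul_headMatrix]
  | 1 => by
    rw [pow_one, tailMatrix_mul_nonbacktrackingMatrix, Matrix.sub_mul, Matrix.mul_assoc,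
      tailMatrix_mul_headMatrix, headMatrix_transpose_mul_headMatrix hreg]
    simp [Fpoly, sq, Nat.cast_smul_eq_nsmul]
  | j + 2 => by
    have hrec : Fpoly k (j + 3) = X * Fpoly k (j + 2) - C ((k : ℝ) - 1) * Fpoly k (j + 1) := rfl
    rw [hrec, map_sub, map_mul, map_mul, aeval_X, aeval_C, aeval_Fpoly_succ hreg (j + 1),
      aeval_Fpoly_succ hreg j, pow_succ' _ (j + 1), ← Matrix.mul_assoc (G.tailMatrix ℝ),
      tailMatrix_mul_nonbacktrackingMatrix, Matrix.sub_mul, Matrix.sub_mul, pow_succ',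
      ← Matrix.mul_assoc (G.headMatrix ℝ)ᵀ, headMatrix_transpose_mul_nonbacktrackingMatrix hreg]
    simp [Algebra.algebraMap_eq_smul_one, Matrix.mul_assoc]

theorem exists_aeval_Fpoly_apply_eq_natCast (hreg : G.IsRegularOfDegree k) (j : ℕ) (u v : V) :
    ∃ m : ℕ, aeval (G.adjMatrix ℝ) (Fpoly k j) u v = m := by
  cases j with
  | zero => exact ⟨if u = v then 1 else 0, by simp [Fpoly, one_apply, apply_ite]⟩
  | succ j =>
    refine ⟨(G.tailMatrix ℕ * G.nonbacktrackingMatrix ℕ ^ j * G.headMatrix ℕ) u v, ?_⟩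
    rw [aeval_Fpoly_succ hreg, ← map_tailMatrix (Nat.castRingHom ℝ),
      ← map_headMatrix (Nat.castRingHom ℝ), ← map_nonbacktrackingMatrix (Nat.castRingHom ℝ),
      ← RingHom.mapMatrix_apply, ← map_pow, RingHom.mapMatrix_apply, ← Matrix.map_mul,
      ← Matrix.map_mul]
    rfl

theorem sum_aeval_adjMatrix_apply (hreg : G.IsRegularOfDegree k) (q : ℝ[X]) (u : V) :
    ∑ v, aeval (G.adjMatrix ℝ) q u v = q.eval (k : ℝ) := by
  have hones : G.adjMatrix ℝ *ᵥ (fun _ => 1) = (k : ℝ) • fun _ => 1 := by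
    ext v; simpa using adjMatrix_mulVec_const_apply_of_regular (a := (1 : ℝ)) hreg (v := v)
  simpa [mulVec, dotProduct] using congrFun (aeval_mulVec_eq_eval_smul hones q) u

theorem aeval_Fpoly_apply_nonneg (hreg : G.IsRegularOfDegree k) (j : ℕ) (u v : V) :
    0 ≤ aeval (G.adjMatrix ℝ) (Fpoly k j) u v := by
  obtain ⟨m, hm⟩ := exists_aeval_Fpoly_apply_eq_natCast hreg j u v
  exact hm ▸ m.cast_nonneg

theorem card_mul_eval_le_trace_aeval_Fpoly_mul_self (hreg : G.IsRegularOfDegree k) (j : ℕ) :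
    Fintype.card V * (Fpoly k j).eval (k : ℝ)
      ≤ (aeval (G.adjMatrix ℝ) (Fpoly k j) * aeval (G.adjMatrix ℝ) (Fpoly k j)).trace := by
  calc _ = ∑ u, ∑ v, aeval (G.adjMatrix ℝ) (Fpoly k j) u v := by
        simp [sum_aeval_adjMatrix_apply hreg]
    _ ≤ _ := sum_sum_le_trace_mul_self (G.isSymm_adjMatrix.aeval _)
        (exists_aeval_Fpoly_apply_eq_natCast hreg j)

theorem aeval_convFpoly_apply_nonneg (hreg : G.IsRegularOfDegree k) {a : ℕ → ℝ} {s : ℕ}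
    (ha : ∀ i ≤ s, 0 ≤ a i) (u v : V) : 0 ≤ aeval (G.adjMatrix ℝ) (convFpoly k a s) u v := by
  rw [convFpoly, map_sum, Matrix.sum_apply]
  refine Finset.sum_nonneg fun j _ => ?_
  rw [map_mul, aeval_C, Algebra.algebraMap_eq_smul_one, smul_mul_assoc, one_mul,
    Matrix.smul_apply, smul_eq_mul]
  exact mul_nonneg (ha _ (Nat.sub_le s j)) (aeval_Fpoly_apply_nonneg hreg j u v)

theorem card_mul_eval_le_trace_aeval_Gpoly_mul_convFpoly (hreg : G.IsRegularOfDegree k)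
    {a : ℕ → ℝ} {s : ℕ} (ha : ∀ i ≤ s, 0 ≤ a i) :
    Fintype.card V * (convFpoly k a s).eval (k : ℝ)
      ≤ (aeval (G.adjMatrix ℝ) (Gpoly k s) * aeval (G.adjMatrix ℝ) (convFpoly k a s)).trace := by
  set E := fun j => aeval (G.adjMatrix ℝ) (Fpoly k j)
  have hb : ∀ j ∈ Finset.range (s + 1), 0 ≤ a (s - j) := fun j _ => ha _ (Nat.sub_le s j)
  have hE : ∀ i j, 0 ≤ (E i * E j).trace := fun i j =>
    trace_mul_nonneg (aeval_Fpoly_apply_nonneg hreg i) (aeval_Fpoly_apply_nonneg hreg j)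
  calc _ = ∑ j ∈ Finset.range (s + 1),
          a (s - j) * (Fintype.card V * (Fpoly k j).eval (k : ℝ)) := by
        rw [convFpoly, eval_finsetSum, Finset.mul_sum]
        simp only [eval_mul, eval_C]
        exact Finset.sum_congr rfl fun j _ => by ring
    _ ≤ ∑ j ∈ Finset.range (s + 1), a (s - j) * (E j * E j).trace :=
        Finset.sum_le_sum fun j hj =>
          mul_le_mul_of_nonneg_left (card_mul_eval_le_trace_aeval_Fpoly_mul_self hreg j) (hb j hj)
    _ ≤ ∑ j ∈ Finset.range (s + 1), ∑ i ∈ Finset.range (s + 1), a (s - j) * (E i * E j).trace :=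
        Finset.sum_le_sum fun j hj => Finset.single_le_sum
          (f := fun i => a (s - j) * (E i * E j).trace)
          (fun i _ => mul_nonneg (hb j hj) (hE i j)) hj
    _ = _ := by
        simp only [Gpoly, convFpoly, map_sum, map_mul, aeval_C, Algebra.algebraMap_eq_smul_one,
          smul_mul_assoc, one_mul, Finset.sum_mul, Finset.mul_sum, mul_smul_comm, trace_sum,
          trace_smul, smul_eq_mul, E]

theorem card_mul_le_trace_aeval_Wpoly_mul_convFpoly (hreg : G.IsRegularOfDegree k) {c : ℝ}
    (hc : 0 ≤ c) {a : ℕ → ℝ} {s : ℕ} (ha : ∀ i ≤ s, 0 ≤ a i) :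
    Fintype.card V * (c * (convFpoly k a s).eval (k : ℝ))
      ≤ (aeval (G.adjMatrix ℝ) (Wpoly k c s * convFpoly k a s)).trace := by
  have hG := card_mul_eval_le_trace_aeval_Gpoly_mul_convFpoly hreg ha
  have hF := trace_mul_nonneg (aeval_Fpoly_apply_nonneg hreg (s + 1))
    (aeval_convFpoly_apply_nonneg hreg ha)
  rw [Wpoly_eq, add_mul, map_add, map_mul, map_mul, map_mul, aeval_C,
    Algebra.algebraMap_eq_smul_one, smul_mul_assoc, one_mul, trace_add, smul_mul_assoc,
    trace_smul, smul_eq_mul]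
  nlinarith

theorem eigenvalues_le_of_isRegularOfDegree (hreg : G.IsRegularOfDegree k)
    (hA : (G.adjMatrix ℝ).IsHermitian) (i : V) : hA.eigenvalues i ≤ k := by
  have hμ : Module.End.HasEigenvalue (toLin' (G.adjMatrix ℝ)) (hA.eigenvalues i) := by
    rw [Module.End.hasEigenvalue_iff_mem_spectrum, spectrum_toLin']
    exact hA.eigenvalues_mem_spectrum_real i
  obtain ⟨v, hv⟩ := eigenvalue_mem_ball hμ
  rw [Metric.mem_closedBall, adjMatrix_apply, if_neg G.irrefl, Real.dist_eq, sub_zero] at hv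
  calc hA.eigenvalues i ≤ _ := (le_abs_self _).trans hv
    _ ≤ ∑ w, ‖G.adjMatrix ℝ v w‖ :=
      Finset.sum_le_sum_of_subset_of_nonneg (Finset.subset_univ _) fun _ _ _ => norm_nonneg _
    _ = k := by simp [adjMatrix_apply, apply_ite, ← hreg v, degree, neighborFinset_eq_filter]

theorem exists_eigenvalues_eq_of_isRegularOfDegree [Nonempty V] (hreg : G.IsRegularOfDegree k)
    (hA : (G.adjMatrix ℝ).IsHermitian) : ∃ i, hA.eigenvalues i = k := by
  rw [← Set.mem_range, ← hA.spectrum_real_eq_range_eigenvalues, ← spectrum_toLin',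
    ← Module.End.hasEigenvalue_iff_mem_spectrum]
  refine Module.End.hasEigenvalue_of_hasEigenvector (x := Function.const V 1) ⟨?_, ?_⟩
  · rw [Module.End.mem_eigenspace_iff, toLin'_apply]
    ext v
    simp [hreg v]
  · exact Function.const_ne_zero.mpr one_ne_zero

/-- All eigenvalues but the largest one, `k`, are at most `θ`, where `f ≤ 0`. -/
theorem trace_aeval_adjMatrix_le_eval [Nonempty V] (hreg : G.IsRegularOfDegree k) {θ : ℝ}
    (hθ : secondEigenvalue G ≤ θ) {f : ℝ[X]} (hf : ∀ x ≤ θ, f.eval x ≤ 0) :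
    (aeval (G.adjMatrix ℝ) f).trace ≤ f.eval (k : ℝ) := by
  set hA := adjMatrix_isHermitian G
  set l := (eigMultiset G).sort (· ≤ ·)
  have hl : ∀ x, x ∈ l ↔ ∃ i, hA.eigenvalues i = x := by
    simp [l, Multiset.mem_sort, eigMultiset]
  have hsum : (aeval (G.adjMatrix ℝ) f).trace = (l.map f.eval).sum := by
    rw [hA.trace_aeval_s4, ← Multiset.sum_coe, ← Multiset.map_coe, Multiset.sort_eq, eigMultiset,
      Multiset.map_map]
    rfl
  obtain ⟨i, hi⟩ := exists_eigenvalues_eq_of_isRegularOfDegree hreg hA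
  rw [hsum]
  refine List.SortedLE.sum_map_le (List.sortedLE_iff_pairwise.mpr (Multiset.pairwise_sort _ _))
    ((hl _).2 ⟨i, hi⟩) (fun x hx => ?_) hθ hf
  obtain ⟨j, rfl⟩ := (hl x).1 hx
  exact eigenvalues_le_of_isRegularOfDegree hreg hA j

end SimpleGraph

theorem stmt4 (k t : ℕ) (hk : 3 ≤ k) (ht : 2 ≤ t) (c : ℝ) (hc : 0 < c) (lam2 : ℝ)
    (hroot : (C (c - 1) * Gpoly k (t - 2) + Gpoly k (t - 1)).IsRoot lam2)
    (hmax : ∀ x : ℝ, (C (c - 1) * Gpoly k (t - 2) + Gpoly k (t - 1)).IsRoot x → x ≤ lam2)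
    {V : Type*} [Fintype V] [DecidableEq V] (G : SimpleGraph V) [DecidableRel G.Adj]
    (hconn : G.Connected) (hreg : G.IsRegularOfDegree k)
    (hlam : secondEigenvalue G ≤ lam2) :
    (Fintype.card V : ℝ) ≤ Mbound k t c := by
  obtain ⟨s, rfl⟩ : ∃ s, t = s + 2 := ⟨t - 2, by omega⟩
  change (Wpoly k c s).IsRoot lam2 at hroot
  change ∀ x, (Wpoly k c s).IsRoot x → x ≤ lam2 at hmax
  have : Nonempty V := hconn.nonempty
  set r := convFpoly k (quotCoeff k c lam2) s
  have ha : ∀ i ≤ s, 0 ≤ quotCoeff k c lam2 i :=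
    quotCoeff_nonneg fun j hj => Wpoly_eval_pos_of_forall_isRoot_le (by omega) hc hmax hj
  have hr : 0 < r.eval (k : ℝ) := convFpoly_eval_natCast_pos (by omega) ha one_pos
  have hW : Wpoly k c s = (X - C lam2) * r := by
    rw [X_sub_C_mul_convFpoly_quotCoeff, hroot.eq_zero, C_0, sub_zero]
  have hlow := G.card_mul_le_trace_aeval_Wpoly_mul_convFpoly hreg hc.le ha
  have hup := G.trace_aeval_adjMatrix_le_eval hreg hlam (f := Wpoly k c s * r) fun x hx => by
    rw [eval_mul, hW, eval_mul, eval_sub, eval_X, eval_C]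
    nlinarith [mul_self_nonneg (r.eval x)]
  rw [eval_mul, Wpoly_eval_natCast c hc.ne'] at hup
  have key : (Fintype.card V : ℝ) * (c * r.eval (k : ℝ))
      ≤ Mbound k (s + 2) c * (c * r.eval (k : ℝ)) := by linarith [hlow.trans hup]
  exact le_of_mul_le_mul_right key (mul_pos hc hr)
end

section
/- Let k ≥ 3 and t ≥ 2 be integers and c > 0 a real number. The eigenvalues of the t×t matrix T(k,t,c) are exactly k together with the zeros of the polynomial (c−1)·G_{t−2} + G_{t−1}; in particular all eigenvalues of T(k,t,c) are real and simple. -/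
open Polynomial

/-!
Both `T(k,t,c)` and `X - T(k,t,c)` are tridiagonal, and the determinant of a tridiagonal matrix
is the continuant of its diagonal and of the products `b i * c i` of opposite off-diagonal
entries (expand along the last row). For `X - T` the leading principal minors of size `j < t`
satisfy the three-term recurrence of the `F_j`, and the full determinant is turned into
`(X - k)((c - 1) G_{t-2} + G_{t-1})` by `(X - k) G_j = F_{j+1} - s_j F_j`, where `s_j` is the
`j`-th superdiagonal entry.

As the characteristic polynomial only sees the products `b i * c i > 0`, `T` has the same one as
the symmetric tridiagonal matrix with off-diagonal entries `√(b i * c i)`: its `t` roots are the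
eigenvalues of a real symmetric matrix. They are simple because, the superdiagonal being nonzero,
an eigenvector vanishing in its first coordinate vanishes everywhere; so for two orthonormal
eigenvectors `u`, `w` with the same eigenvalue, `w₀ u - u₀ w = 0`, and pairing with `u` gives
`w₀ = 0`, hence `w = 0`.
-/

section Tridiagonal
open Matrix

variable {R : Type*} [CommRing R]

def tridiagonal (a b c : ℕ → R) (n : ℕ) : Matrix (Fin n) (Fin n) R :=
  of fun i j =>
    if (i : ℕ) = j then a i
    else if (j : ℕ) = i + 1 then b i
    else if (i : ℕ) = j + 1 then c j
    else 0

def continuant (a p : ℕ → R) : ℕ → R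
  | 0 => 1
  | 1 => a 0
  | n + 2 => a (n + 1) * continuant a p (n + 1) - p n * continuant a p n

variable (a b c : ℕ → R)

lemma tridiagonal_apply (n : ℕ) (i j : Fin n) :
    tridiagonal a b c n i j =
      if (i : ℕ) = j then a i
      else if (j : ℕ) = i + 1 then b i
      else if (i : ℕ) = j + 1 then c j
      else 0 := rfl

lemma tridiagonal_apply_eq_zero {n : ℕ} {i j : Fin n}
    (h : (i : ℕ) + 1 < j ∨ (j : ℕ) + 1 < i) :
    tridiagonal a b c n i j = 0 := by
  rw [tridiagonal_apply, if_neg (by omega), if_neg (by omega), if_neg (by omega)]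

lemma tridiagonal_submatrix_castSucc (n : ℕ) :
    (tridiagonal a b c (n + 1)).submatrix Fin.castSucc Fin.castSucc = tridiagonal a b c n := by
  ext i j
  simp [tridiagonal]

lemma det_tridiagonal_submatrix_last_castSucc (n : ℕ) :
    ((tridiagonal a b c (n + 2)).submatrix Fin.castSucc (Fin.last n).castSucc.succAbove).det =
      b n * (tridiagonal a b c n).det := by
  rw [det_succ_column _ (Fin.last n), Fintype.sum_eq_single (Fin.last n)]
  · have hminor : (((tridiagonal a b c (n + 2)).submatrix Fin.castSucc
        (Fin.last n).castSucc.succAbove).submatrix (Fin.last n).succAbove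
          (Fin.last n).succAbove) = tridiagonal a b c n := by
      ext i j
      simp [tridiagonal_apply, Fin.succAbove_last, Fin.succAbove_of_castSucc_lt,
        Fin.castSucc_lt_castSucc_iff]
    rw [hminor]
    simp [tridiagonal_apply]
  · intro i hi
    have hin := Fin.val_lt_last hi
    simp [tridiagonal_apply_eq_zero a b c (i := i.castSucc) (j := Fin.last (n + 1))
      (by simp; omega)]

theorem det_tridiagonal : ∀ n, (tridiagonal a b c n).det = continuant a (b * c) n
  | 0 => by simp [continuant]
  | 1 => by simp [continuant, tridiagonal]
  | n + 2 => by
    rw [det_succ_row _ (Fin.last (n + 1)),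
      Fintype.sum_eq_add (Fin.last n).castSucc (Fin.last (n + 1)) (Fin.castSucc_lt_last _).ne]
    · rw [Fin.succAbove_last, det_tridiagonal_submatrix_last_castSucc,
        tridiagonal_submatrix_castSucc, det_tridiagonal n, det_tridiagonal (n + 1)]
      have hc : tridiagonal a b c (n + 2) (Fin.last (n + 1)) (Fin.last n).castSucc = c n := by
        rw [tridiagonal_apply, if_neg (by simp), if_neg (by simp; omega), if_pos (by simp)]
        rfl
      have ha : tridiagonal a b c (n + 2) (Fin.last (n + 1)) (Fin.last (n + 1)) = a (n + 1) := by
        simp [tridiagonal_apply]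
      have h1 : (-1 : R) ^ (n + 1 + n) = -1 := Odd.neg_one_pow ⟨n, by ring⟩
      have h2 : (-1 : R) ^ (n + 1 + (n + 1)) = 1 := Even.neg_one_pow ⟨n + 1, rfl⟩
      simp only [ha, hc, Fin.val_last, Fin.val_castSucc, h1, h2, continuant, Pi.mul_apply]
      ring
    · rintro j ⟨hj, hj'⟩
      have hjn : (j : ℕ) < n := by
        rw [Ne, Fin.ext_iff] at hj hj'
        simp only [Fin.val_castSucc, Fin.val_last] at hj hj'
        omega
      simp [tridiagonal_apply_eq_zero a b c (i := Fin.last (n + 1)) (j := j) (by simp; omega)]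

lemma charmatrix_tridiagonal (n : ℕ) :
    charmatrix (tridiagonal a b c n) =
      tridiagonal (fun i => X - C (a i)) (fun i => -C (b i)) (fun i => -C (c i)) n := by
  ext i j
  by_cases hij : i = j
  · subst hij; simp [tridiagonal_apply]
  · rw [charmatrix_apply_ne _ _ _ hij]
    simp only [tridiagonal_apply, Fin.val_inj, hij, if_false]
    split_ifs <;> simp

theorem charpoly_tridiagonal (n : ℕ) :
    (tridiagonal a b c n).charpoly =
      continuant (fun i => X - C (a i)) (fun i => C (b i * c i)) n := by
  rw [charpoly, charmatrix_tridiagonal, det_tridiagonal]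
  congr 1
  ext i : 1
  simp

lemma tridiagonal_transpose (n : ℕ) : (tridiagonal a b c n)ᵀ = tridiagonal a c b n := by
  ext i j
  simp only [transpose_apply, tridiagonal_apply]
  split_ifs <;> first | rfl | omega | congr 1

lemma isHermitian_tridiagonal [StarRing R] [TrivialStar R] (n : ℕ) :
    (tridiagonal a b b n).IsHermitian := by
  rw [IsHermitian, conjTranspose_eq_transpose_of_trivial, tridiagonal_transpose]

end Tridiagonal

section Hessenberg
open Matrix

variable {R : Type*} [CommRing R] [NoZeroDivisors R] {n : ℕ} {A : Matrix (Fin n) (Fin n) R}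

theorem eq_zero_of_mulVec_eq_smul_of_apply_zero
    (hA : ∀ i j : Fin n, (i : ℕ) + 1 < j → A i j = 0)
    (hsup : ∀ i j : Fin n, (j : ℕ) = i + 1 → A i j ≠ 0) {μ : R} {v : Fin n → R}
    (hv : A *ᵥ v = μ • v) (h0 : ∀ i : Fin n, (i : ℕ) = 0 → v i = 0) : v = 0 := by
  suffices h : ∀ m, ∀ j : Fin n, (j : ℕ) ≤ m → v j = 0 from funext fun j => h j j le_rfl
  intro m
  induction m with
  | zero => exact fun j hj => h0 j (by omega)
  | succ m ih =>
    intro j hj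
    rcases Nat.lt_or_ge (j : ℕ) (m + 1) with hjm | hjm
    · exact ih j (by omega)
    set i : Fin n := ⟨m, by omega⟩
    have hrow := congrFun hv i
    simp only [mulVec, dotProduct, Pi.smul_apply, smul_eq_mul] at hrow
    rw [Fintype.sum_eq_single j] at hrow
    swap
    · intro l hl
      rcases Nat.lt_or_ge (l : ℕ) (m + 1) with hlm | hlm
      · rw [ih l (by omega), mul_zero]
      · rw [hA i l (by simp [i]; omega), zero_mul]
    rw [ih i le_rfl, mul_zero] at hrow
    exact (mul_eq_zero.mp hrow).resolve_left (hsup i j (by simp [i]; omega))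

theorem Matrix.IsHermitian.eigenvalues_injective_of_superdiag_ne_zero {n : ℕ}
    {A : Matrix (Fin n) (Fin n) ℝ} (hA : A.IsHermitian)
    (hzero : ∀ i j : Fin n, (i : ℕ) + 1 < j → A i j = 0)
    (hsup : ∀ i j : Fin n, (j : ℕ) = i + 1 → A i j ≠ 0) :
    Function.Injective hA.eigenvalues := by
  intro i j hij
  by_contra hne
  set b := hA.eigenvectorBasis
  set l₀ : Fin n := ⟨0, Fin.pos i⟩
  have hv (l : Fin n) : A *ᵥ ⇑(b l) = hA.eigenvalues l • ⇑(b l) :=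
    hA.mulVec_eigenvectorBasis l
  set z := b j l₀ • b i - b i l₀ • b j
  have hz : z = 0 := by
    have := eq_zero_of_mulVec_eq_smul_of_apply_zero hzero hsup (μ := hA.eigenvalues i) (v := ⇑z)
      (by
        simp only [z, WithLp.ofLp_sub, WithLp.ofLp_smul, mulVec_sub, mulVec_smul, hv, hij]
        module)
      (fun l hl => by
        simp only [z, PiLp.sub_apply, PiLp.smul_apply, smul_eq_mul, show l = l₀ from Fin.ext hl]
        ring)
    exact PiLp.ext (congrFun this)
  have hj₀ : b j l₀ = 0 := by
    simpa [z, inner_sub_right, inner_smul_right, b.inner_eq_one, b.inner_eq_zero hne] using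
      congrArg (inner ℝ (b i)) hz
  have hbj : b j = 0 := PiLp.ext <| congrFun <|
    eq_zero_of_mulVec_eq_smul_of_apply_zero hzero hsup (hv j)
      (fun l hl => by rwa [show l = l₀ from Fin.ext hl])
  simpa [hbj] using b.norm_eq_one j

end Hessenberg

section Jacobi
open Matrix

variable {a b c : ℕ → ℝ}

lemma charpoly_tridiagonal_eq_symmetrized (h : ∀ i, 0 ≤ b i * c i) (n : ℕ) :
    (tridiagonal a b c n).charpoly =
      (tridiagonal a (fun i => √(b i * c i)) (fun i => √(b i * c i)) n).charpoly := by
  simp only [charpoly_tridiagonal, Real.mul_self_sqrt (h _)]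

lemma roots_charpoly_tridiagonal (h : ∀ i, 0 ≤ b i * c i) (n : ℕ) :
    (tridiagonal a b c n).charpoly.roots =
      Multiset.map (isHermitian_tridiagonal a (fun i => √(b i * c i)) n).eigenvalues
        Finset.univ.val := by
  rw [charpoly_tridiagonal_eq_symmetrized h,
    (isHermitian_tridiagonal _ _ n).roots_charpoly_eq_eigenvalues]
  simp only [RCLike.ofReal_real_eq_id, Function.id_comp]

theorem card_roots_charpoly_tridiagonal (h : ∀ i, 0 ≤ b i * c i) (n : ℕ) :
    Multiset.card (tridiagonal a b c n).charpoly.roots = n := by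
  simp [roots_charpoly_tridiagonal h]

theorem nodup_roots_charpoly_tridiagonal (h : ∀ i, 0 < b i * c i) (n : ℕ) :
    (tridiagonal a b c n).charpoly.roots.Nodup := by
  rw [roots_charpoly_tridiagonal (fun i => (h i).le)]
  refine Multiset.Nodup.map ?_ Finset.univ.nodup
  refine IsHermitian.eigenvalues_injective_of_superdiag_ne_zero _
    (fun i j hij => tridiagonal_apply_eq_zero _ _ _ (.inl hij)) (fun i j hij => ?_)
  rw [tridiagonal_apply, if_neg (by omega), if_pos hij]
  exact (Real.sqrt_pos.2 (h i)).ne'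

end Jacobi

noncomputable def Tsup (k i : ℕ) : ℝ := if i = 0 then k else k - 1

noncomputable def Tsub (t : ℕ) (c : ℝ) (j : ℕ) : ℝ := if j + 1 = t - 1 then c else 1

noncomputable def Tdiag (k t : ℕ) (c : ℝ) (i : ℕ) : ℝ :=
  k - (if i + 1 < t then Tsup k i else 0) - (if 0 < i then Tsub t c (i - 1) else 0)

lemma Tmat_eq_tridiagonal (k t : ℕ) (c : ℝ) :
    Tmat k t c = tridiagonal (Tdiag k t c) (Tsup k) (Tsub t c) t := by
  ext i j
  simp only [Tmat, Matrix.of_apply, tridiagonal_apply, Tdiag, Tsup, Tsub, Fin.ext_iff]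
  split_ifs <;> first | rfl | omega

lemma Tsup_pos {k : ℕ} (hk : 2 ≤ k) (i : ℕ) : 0 < Tsup k i := by
  have : (2 : ℝ) ≤ k := by exact_mod_cast hk
  unfold Tsup; split_ifs <;> linarith

lemma Tsub_pos {c : ℝ} (hc : 0 < c) (t j : ℕ) : 0 < Tsub t c j := by
  unfold Tsub; split_ifs <;> [exact hc; exact one_pos]

lemma Fpoly_add_two (k j : ℕ) :
    Fpoly k (j + 2) = X * Fpoly k (j + 1) - C (Tsup k j) * Fpoly k j := by
  rcases j with _ | j
  · simp [Fpoly, Tsup, sq]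
  · simp [Fpoly, Tsup]

lemma X_sub_C_mul_Gpoly (k j : ℕ) :
    (X - C (k : ℝ)) * Gpoly k j = Fpoly k (j + 1) - C (Tsup k j) * Fpoly k j := by
  induction j with
  | zero => simp [Gpoly, Fpoly, Tsup]
  | succ j ih =>
    rw [Gpoly, Finset.sum_range_succ, ← Gpoly, mul_add, ih, Fpoly_add_two]
    simp only [Tsup, if_neg j.succ_ne_zero, map_sub, map_natCast, map_one]
    ring

lemma continuant_Tdiag_eq_Fpoly (k t : ℕ) (c : ℝ) :
    ∀ j ≤ t - 1, continuant (fun i => X - C (Tdiag k t c i))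
      (fun i => C (Tsup k i * Tsub t c i)) j = Fpoly k j
  | 0, _ => rfl
  | 1, _ => by simp [continuant, Tdiag, Tsup, Fpoly, show 1 < t by omega]
  | j + 2, hj => by
    rw [continuant, continuant_Tdiag_eq_Fpoly k t c j (by omega),
      continuant_Tdiag_eq_Fpoly k t c (j + 1) (by omega), Fpoly_add_two]
    simp [Tdiag, Tsub, Tsup, show j + 2 < t by omega, show j + 1 ≠ t - 1 by omega]

theorem charpoly_Tmat {k t : ℕ} (ht : 2 ≤ t) (c : ℝ) :
    (Tmat k t c).charpoly
      = (X - C (k : ℝ)) * (C (c - 1) * Gpoly k (t - 2) + Gpoly k (t - 1)) := by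
  obtain ⟨u, rfl⟩ : ∃ u, t = u + 2 := ⟨t - 2, by omega⟩
  rw [Tmat_eq_tridiagonal, charpoly_tridiagonal, continuant,
    continuant_Tdiag_eq_Fpoly k _ c u (by omega),
    continuant_Tdiag_eq_Fpoly k _ c (u + 1) (by omega)]
  have hG := X_sub_C_mul_Gpoly k u
  have hG' := X_sub_C_mul_Gpoly k (u + 1)
  have hF := Fpoly_add_two k u
  simp only [Tsup, if_neg (Nat.succ_ne_zero u), map_sub, map_natCast, map_one] at hG'
  rw [map_natCast] at hG
  simp only [Tdiag, Tsub, lt_irrefl, if_false, if_true, Nat.add_one_sub_one, sub_zero,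
    Nat.succ_pos, Nat.add_sub_cancel, map_sub, map_natCast, map_mul, map_one]
  linear_combination -(C c - 1) * hG - hG' - hF

theorem stmt5 (k t : ℕ) (hk : 3 ≤ k) (ht : 2 ≤ t) (c : ℝ) (hc : 0 < c) :
    (Tmat k t c).charpoly
        = (X - C (k : ℝ)) * (C (c - 1) * Gpoly k (t - 2) + Gpoly k (t - 1)) ∧
      Multiset.card (Tmat k t c).charpoly.roots = t ∧
      (Tmat k t c).charpoly.roots.Nodup := by
  refine ⟨charpoly_Tmat ht c, ?_⟩
  have hprod (i : ℕ) : 0 < Tsup k i * Tsub t c i :=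
    mul_pos (Tsup_pos (by omega) i) (Tsub_pos hc t i)
  rw [Tmat_eq_tridiagonal]
  exact ⟨card_roots_charpoly_tridiagonal (fun i => (hprod i).le) t,
    nodup_roots_charpoly_tridiagonal hprod t⟩
end

section
/- Let G be a connected k-regular finite simple graph and λ a real number with λ₂(G) ≤ λ < k. Let H be a nonempty induced subgraph of G with average degree deg(H) ≥ λ, and suppose that Γ₁(H), the set of vertices at distance exactly 1 from V(H), and Γ_{≥2}(H), the set of vertices at distance at least 2 from V(H), are both nonempty. Then the subgraph K of G induced on Γ_{≥2}(H) satisfies deg(K) ≤ λ, and deg(K) = λ can hold only if deg(H) = λ₂(G) = λ. -/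
open Polynomial

/-- Average degree of the subgraph of `G` induced on a finset `S`:
twice the number of edges divided by the number of vertices. -/
noncomputable def avgDegFinset {V : Type*} [DecidableEq V] (G : SimpleGraph V)
    [DecidableRel G.Adj] (S : Finset V) : ℝ :=
  (∑ v ∈ S, ((S.filter (G.Adj v)).card : ℝ)) / S.card

instance induceDecidableRel {V : Type*} (G : SimpleGraph V) [DecidableRel G.Adj] (s : Set V) :
    DecidableRel (SimpleGraph.induce s G).Adj := fun a b => decidable_of_iff (G.Adj a b) Iff.rfl

open Matrix Finset

/-!
Let `C` be the set of vertices at distance at least two from `S`. The test vector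
`x = |C| • 𝟙_S - |S| • 𝟙_C` is orthogonal to the all-ones eigenvector (eigenvalue `k`), and since
no edge joins `S` and `C`, its Rayleigh quotient is the weighted mean
`(|C| deg(S) + |S| deg(C)) / (|S| + |C|)`. At most one eigenvalue exceeds `λ₂`, and its
eigenvector is the all-ones one because `k > λ₂`; so the Rayleigh quotient of `x` is at most
`λ₂`. Hence this weighted mean is at most `λ₂ ≤ λ ≤ deg(S)`, which forces `deg(C) ≤ λ`, with
equality only if `deg(S) = λ₂ = λ`.
-/

theorem OrthonormalBasis.sum_dotProduct_mul_dotProduct {ι n : Type*} [Fintype ι] [Fintype n]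
    (b : OrthonormalBasis ι ℝ (EuclideanSpace ℝ n)) (x y : n → ℝ) :
    ∑ i, (⇑(b i) ⬝ᵥ x) * (⇑(b i) ⬝ᵥ y) = x ⬝ᵥ y := by
  simpa [EuclideanSpace.inner_eq_star_dotProduct, dotProduct_comm] using
    b.sum_inner_mul_inner (WithLp.toLp 2 x) (WithLp.toLp 2 y)

theorem Matrix.IsHermitian.dotProduct_mulVec_eigenvectorBasis {n : Type*} [Fintype n]
    [DecidableEq n] {A : Matrix n n ℝ} (hA : A.IsHermitian) (i : n) (x : n → ℝ) :
    ⇑(hA.eigenvectorBasis i) ⬝ᵥ (A *ᵥ x) =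
      hA.eigenvalues i * (⇑(hA.eigenvectorBasis i) ⬝ᵥ x) := by
  rw [dotProduct_mulVec, ← mulVec_transpose, ← conjTranspose_eq_transpose_of_trivial, hA.eq,
    hA.mulVec_eigenvectorBasis, smul_dotProduct, smul_eq_mul]

theorem Matrix.IsHermitian.dotProduct_mulVec_self_eq_sum {n : Type*} [Fintype n]
    [DecidableEq n] {A : Matrix n n ℝ} (hA : A.IsHermitian) (x : n → ℝ) :
    x ⬝ᵥ (A *ᵥ x) = ∑ i, hA.eigenvalues i * (⇑(hA.eigenvectorBasis i) ⬝ᵥ x) ^ 2 := by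
  rw [← hA.eigenvectorBasis.sum_dotProduct_mul_dotProduct]
  simp only [hA.dotProduct_mulVec_eigenvectorBasis]
  exact sum_congr rfl fun i _ => by ring

theorem Matrix.IsHermitian.dotProduct_mulVec_le_of_dotProduct_eq_zero {n : Type*} [Fintype n]
    [DecidableEq n] {A : Matrix n n ℝ} (hA : A.IsHermitian) {μ k : ℝ} (hμk : μ < k)
    (hcount : #{i | μ < hA.eigenvalues i} ≤ 1) {w : n → ℝ} (hw0 : w ≠ 0)
    (hw : A *ᵥ w = k • w) {x : n → ℝ} (hx : x ⬝ᵥ w = 0) :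
    x ⬝ᵥ (A *ᵥ x) ≤ μ * (x ⬝ᵥ x) := by
  set b := hA.eigenvectorBasis with hb
  have horth : ∀ i, hA.eigenvalues i ≠ k → ⇑(b i) ⬝ᵥ w = 0 := fun i hi => by
    have := hA.dotProduct_mulVec_eigenvectorBasis i w
    rw [hw, dotProduct_smul, smul_eq_mul] at this
    exact (mul_eq_mul_right_iff.mp this).resolve_left hi.symm
  obtain ⟨i₀, hi₀⟩ : ∃ i₀, ⇑(b i₀) ⬝ᵥ w ≠ 0 := by
    by_contra! h
    refine hw0 (dotProduct_self_eq_zero.mp ?_)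
    rw [← b.sum_dotProduct_mul_dotProduct]
    simp [h]
  have hk : hA.eigenvalues i₀ = k := not_imp_comm.mp (horth i₀) hi₀
  have hle : ∀ i ≠ i₀, hA.eigenvalues i ≤ μ := fun i hi => by
    by_contra! hμi
    exact hi (card_le_one.mp hcount i (by simp [hμi]) i₀ (by simp [hk, hμk]))
  -- the only coordinate of `x` with eigenvalue above `μ` vanishes, since `x ⊥ w`
  have hx₀ : ⇑(b i₀) ⬝ᵥ x = 0 := by
    rw [← b.sum_dotProduct_mul_dotProduct, sum_eq_single i₀
      (fun i _ hi => by rw [horth i (by linarith [hle i hi]), mul_zero]) (by simp)] at hx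
    exact (mul_eq_zero.mp hx).resolve_right hi₀
  rw [hA.dotProduct_mulVec_self_eq_sum, ← hb, ← b.sum_dotProduct_mul_dotProduct, mul_sum]
  refine sum_le_sum fun i _ => ?_
  rcases eq_or_ne i i₀ with rfl | hi
  · simp [hx₀]
  · rw [← sq]
    exact mul_le_mul_of_nonneg_right (hle i hi) (sq_nonneg _)

theorem List.Pairwise.countP_lt_getD_length_sub_two_le_one {α : Type*} [LinearOrder α]
    {l : List α} (hl : l.Pairwise (· ≤ ·)) (d : α) :
    l.countP (fun a => l.getD (l.length - 2) d < a) ≤ 1 := by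
  set m := l.getD (l.length - 2) d with hm
  have hinit : (l.take (l.length - 1)).countP (fun a => m < a) = 0 := by
    refine List.countP_eq_zero.mpr fun a ha => ?_
    obtain ⟨i, hi, rfl⟩ := List.getElem_of_mem ha
    simp only [List.length_take] at hi
    rw [List.getElem_take, hm, List.getD_eq_getElem _ _ (by omega), decide_eq_true_eq, not_lt]
    exact hl.rel_get_of_le (a := ⟨i, by omega⟩) (b := ⟨l.length - 2, by omega⟩)
      (by simp; omega)
  have hlast := (l.drop (l.length - 1)).countP_le_length (p := fun a => m < a)
  rw [List.length_drop] at hlast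
  rw [← l.take_append_drop (l.length - 1), List.countP_append]
  omega

theorem card_filter_secondEigenvalue_lt_eigenvalues_le_one {V : Type*} [Fintype V]
    [DecidableEq V] (G : SimpleGraph V) [DecidableRel G.Adj] :
    #{i | secondEigenvalue G < (adjMatrix_isHermitian G).eigenvalues i} ≤ 1 := by
  have hcount : #{i | secondEigenvalue G < (adjMatrix_isHermitian G).eigenvalues i} =
      (eigMultiset G).countP (secondEigenvalue G < ·) := by
    rw [eigMultiset, Multiset.countP_map]
    rfl
  rw [hcount, ← Multiset.sort_eq (eigMultiset G) (· ≤ ·), Multiset.coe_countP]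
  exact (Multiset.pairwise_sort _ _).countP_lt_getD_length_sub_two_le_one 0

theorem SimpleGraph.indicator_dotProduct_adjMatrix_mulVec_indicator {V R : Type*} [Fintype V]
    [DecidableEq V] [NonAssocSemiring R] (G : SimpleGraph V) [DecidableRel G.Adj] (S T : Finset V) :
    (S : Set V).indicator 1 ⬝ᵥ (G.adjMatrix R *ᵥ (T : Set V).indicator 1) =
      ∑ v ∈ S, ((T.filter (G.Adj v)).card : R) := by
  simp only [dotProduct, Set.indicator_apply, adjMatrix_mulVec_apply, Finset.mem_coe,
    Pi.one_apply, ite_mul, one_mul, zero_mul, sum_ite_mem, univ_inter]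
  refine sum_congr rfl fun v _ => ?_
  rw [sum_const, nsmul_one]
  congr 2
  ext u
  simp [and_comm]

theorem indicator_dotProduct_indicator {V R : Type*} [Fintype V] [DecidableEq V]
    [NonAssocSemiring R] (S T : Finset V) :
    (S : Set V).indicator (1 : V → R) ⬝ᵥ (T : Set V).indicator 1 = #(S ∩ T) := by
  simp only [dotProduct, Set.indicator_apply, Finset.mem_coe, Pi.one_apply, mul_ite,
    mul_one, mul_zero, ← ite_and, sum_boole]
  congr 2
  ext u
  simp [and_comm]

theorem avgDegFinset_mul_card {V : Type*} [DecidableEq V] (G : SimpleGraph V)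
    [DecidableRel G.Adj] {S : Finset V} (hS : S.Nonempty) :
    avgDegFinset G S * #S = ∑ v ∈ S, ((S.filter (G.Adj v)).card : ℝ) :=
  div_mul_cancel₀ _ (by exact_mod_cast hS.card_pos.ne')

theorem SimpleGraph.card_mul_avgDegFinset_add_card_mul_avgDegFinset_le {V : Type*} [Fintype V]
    [DecidableEq V] (G : SimpleGraph V) [DecidableRel G.Adj] {k : ℕ}
    (hreg : G.IsRegularOfDegree k) (hk : secondEigenvalue G < k) {S C : Finset V}
    (hS : S.Nonempty) (hC : C.Nonempty) (hSC : Disjoint S C)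
    (hnadj : ∀ u ∈ S, ∀ v ∈ C, ¬G.Adj u v) :
    #C * avgDegFinset G S + #S * avgDegFinset G C ≤ secondEigenvalue G * (#C + #S) := by
  have hs : (0 : ℝ) < #S := by exact_mod_cast hS.card_pos
  have hc : (0 : ℝ) < #C := by exact_mod_cast hC.card_pos
  set χS : V → ℝ := (S : Set V).indicator 1
  set χC : V → ℝ := (C : Set V).indicator 1
  have hone : (1 : V → ℝ) = ((univ : Finset V) : Set V).indicator 1 := by simp
  set x := (#C : ℝ) • χS - (#S : ℝ) • χC
  have hx1 : x ⬝ᵥ 1 = 0 := by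
    rw [hone]
    simp only [x, χS, χC, sub_dotProduct, smul_dotProduct, indicator_dotProduct_indicator,
      inter_univ, smul_eq_mul]
    ring
  have hxx : x ⬝ᵥ x = #S * #C * (#S + #C) := by
    simp only [x, χS, χC, sub_dotProduct, dotProduct_sub, smul_dotProduct, dotProduct_smul,
      smul_eq_mul, indicator_dotProduct_indicator, inter_self,
      disjoint_iff_inter_eq_empty.mp hSC, disjoint_iff_inter_eq_empty.mp hSC.symm, card_empty,
      Nat.cast_zero]
    ring
  have hSC_edges : ∑ v ∈ S, ((C.filter (G.Adj v)).card : ℝ) = 0 :=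
    sum_eq_zero fun u hu => by simpa [filter_eq_empty_iff] using hnadj u hu
  have hCS_edges : ∑ v ∈ C, ((S.filter (G.Adj v)).card : ℝ) = 0 :=
    sum_eq_zero fun v hv => by
      simpa [filter_eq_empty_iff] using fun u hu (h : G.Adj v u) => hnadj u hu v hv h.symm
  have hxAx : x ⬝ᵥ (G.adjMatrix ℝ *ᵥ x) =
      #S * #C * (#C * avgDegFinset G S + #S * avgDegFinset G C) := by
    simp only [x, χS, χC, mulVec_sub, mulVec_smul, dotProduct_sub, sub_dotProduct,
      dotProduct_smul, smul_dotProduct, smul_eq_mul,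
      G.indicator_dotProduct_adjMatrix_mulVec_indicator, hSC_edges, hCS_edges,
      ← avgDegFinset_mul_card G hS, ← avgDegFinset_mul_card G hC]
    ring
  have hA1 : G.adjMatrix ℝ *ᵥ 1 = (k : ℝ) • 1 := by
    ext v
    simp [hreg v]
  have hquad := (adjMatrix_isHermitian G).dotProduct_mulVec_le_of_dotProduct_eq_zero hk
    (card_filter_secondEigenvalue_lt_eigenvalues_le_one G)
    (Function.ne_iff.mpr ⟨hS.choose, by simp⟩) hA1 hx1
  rw [hxAx, hxx] at hquad
  refine le_of_mul_le_mul_left ?_ (mul_pos hs hc)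
  linarith

theorem le_and_eq_of_weighted_mean_le {s c a b μ lam : ℝ} (hs : 0 < s) (hc : 0 < c)
    (h : c * a + s * b ≤ μ * (c + s)) (hμ : μ ≤ lam) (ha : lam ≤ a) :
    b ≤ lam ∧ (b = lam → a = lam ∧ μ = lam) := by
  refine ⟨le_of_mul_le_mul_left (by nlinarith) hs, fun hb => ?_⟩
  subst hb
  have hal : a ≤ b := le_of_mul_le_mul_left (by nlinarith) hc
  have hbμ : b ≤ μ := le_of_mul_le_mul_left (by nlinarith) (add_pos hc hs)
  exact ⟨le_antisymm hal ha, le_antisymm hμ hbμ⟩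

theorem stmt15_general {V : Type*} [Fintype V] [DecidableEq V] (G : SimpleGraph V) [DecidableRel G.Adj]
    (k : ℕ) (lam : ℝ) (hreg : G.IsRegularOfDegree k)
    (hlam : secondEigenvalue G ≤ lam) (hlamk : lam < (k : ℝ))
    (S : Finset V) (hS : S.Nonempty) (hH : lam ≤ avgDegFinset G S)
    (hG2 : (Finset.univ.filter fun v => v ∉ S ∧ ∀ u ∈ S, ¬G.Adj u v).Nonempty) :
    avgDegFinset G (Finset.univ.filter fun v => v ∉ S ∧ ∀ u ∈ S, ¬G.Adj u v) ≤ lam ∧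
      (avgDegFinset G (Finset.univ.filter fun v => v ∉ S ∧ ∀ u ∈ S, ¬G.Adj u v) = lam →
        avgDegFinset G S = lam ∧ secondEigenvalue G = lam) := by
  set C := univ.filter fun v => v ∉ S ∧ ∀ u ∈ S, ¬G.Adj u v
  have hSC : Disjoint S C := disjoint_right.mpr fun v hv => (mem_filter.mp hv).2.1
  have hnadj : ∀ u ∈ S, ∀ v ∈ C, ¬G.Adj u v := fun u hu v hv => (mem_filter.mp hv).2.2 u hu
  have hbound := G.card_mul_avgDegFinset_add_card_mul_avgDegFinset_le hreg
    (hlam.trans_lt hlamk) hS hG2 hSC hnadj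
  exact le_and_eq_of_weighted_mean_le (by exact_mod_cast hS.card_pos)
    (by exact_mod_cast hG2.card_pos) hbound hlam hH

theorem stmt15 {V : Type*} [Fintype V] [DecidableEq V] (G : SimpleGraph V) [DecidableRel G.Adj]
    (k : ℕ) (lam : ℝ) (hconn : G.Connected) (hreg : G.IsRegularOfDegree k)
    (hlam : secondEigenvalue G ≤ lam) (hlamk : lam < (k : ℝ))
    (S : Finset V) (hS : S.Nonempty) (hH : lam ≤ avgDegFinset G S)
    (hG1 : (Finset.univ.filter fun v => v ∉ S ∧ ∃ u ∈ S, G.Adj u v).Nonempty)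
    (hG2 : (Finset.univ.filter fun v => v ∉ S ∧ ∀ u ∈ S, ¬G.Adj u v).Nonempty) :
    avgDegFinset G (Finset.univ.filter fun v => v ∉ S ∧ ∀ u ∈ S, ¬G.Adj u v) ≤ lam ∧
      (avgDegFinset G (Finset.univ.filter fun v => v ∉ S ∧ ∀ u ∈ S, ¬G.Adj u v) = lam →
        avgDegFinset G S = lam ∧ secondEigenvalue G = lam) :=
  stmt15_general G k lam hreg hlam hlamk S hS hH hG2
end
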